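/- arXiv:2305.02891 — 3 statements merged into one kernel-verified Lean document; each statement's English description precedes it below -/
import Mathlib

section
/- Let Ω ⊆ X be a bounded open set with ∂Ω ≠ ∅. For r > 0 set B(∂Ω,r) := {x ∈ X : dist(x,∂Ω) < r} and m_r := m(Ω ∩ B(∂Ω,r)). Then for every r > 0 there exists s ∈ (0,r] such that Per(Ω ∖ B(∂Ω,s)) ≤ m_r / r. In particular, for every λ > 0 the infimum of M_λ(A) := Per(A) + λ·m(Ω ∖ A) over closed sets A ⊆ Ω is finite, being at most m_r/r + λ·m_r. -/
open MeasureTheory Metric Set Filter ENNReal NNReal Topology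

variable {X : Type*} [PseudoMetricSpace X] [MeasurableSpace X]

/-- The asymptotic Lipschitz constant `lip_a f x = inf_{r>0} Lip(f|_{B_r(x)})`,
computed in `ℝ≥0∞` via the optimal Lipschitz constant on each ball. -/
noncomputable def lipa (f : X → ℝ) (x : X) : ℝ≥0∞ :=
  ⨅ (r : ℝ) (_ : 0 < r), ⨆ (y : X) (_ : y ∈ ball x r) (z : X) (_ : z ∈ ball x r),
    edist (f y) (f z) / edist y z

/-- `f` is locally Lipschitz on the set `A`. -/
def LocLipOn (f : X → ℝ) (A : Set X) : Prop :=
  ∀ x ∈ A, ∃ r > 0, ball x r ⊆ A ∧ ∃ K : ℝ≥0, LipschitzOnWith K f (ball x r)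

/-- `fn → f` in `L¹_loc(μ)`: convergence of the integrals of `|fn n - f|` on bounded sets. -/
def TendstoL1loc (μ : Measure X) (fn : ℕ → X → ℝ) (f : X → ℝ) : Prop :=
  ∀ S : Set X, Bornology.IsBounded S →
    Tendsto (fun n => ∫⁻ x in S, ENNReal.ofReal |fn n x - f x| ∂μ) atTop (𝓝 0)

/-- Total variation `|Df|(A)` on an open set `A`. -/
noncomputable def totVarOpen (μ : Measure X) (f : X → ℝ) (A : Set X) : ℝ≥0∞ :=
  ⨅ (fn : ℕ → X → ℝ) (_ : ∀ n, LocLipOn (fn n) A) (_ : TendstoL1loc (μ.restrict A) fn f),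
    atTop.liminf fun n => ∫⁻ x in A, lipa (fn n) x ∂μ

/-- Total variation `|Df|(B)` of a Borel set `B`, by outer regularization over open sets. -/
noncomputable def totVar (μ : Measure X) (f : X → ℝ) (B : Set X) : ℝ≥0∞ :=
  ⨅ (A : Set X) (_ : IsOpen A) (_ : B ⊆ A), totVarOpen μ f A

/-- `Per(E; F) = |Dχ_E|_X(F)`. -/
noncomputable def perIn (μ : Measure X) (E F : Set X) : ℝ≥0∞ :=
  totVar μ (E.indicator 1) F

/-- `Per(E) = |Dχ_E|_X(X)`. -/
noncomputable def per (μ : Measure X) (E : Set X) : ℝ≥0∞ := perIn μ E univ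

/-- `Per_B(E) = |Dχ_E|_B(B)`: the perimeter of `E` on `B`, computed in `(X, d, μ|_B)`. -/
noncomputable def perOn (μ : Measure X) (B E : Set X) : ℝ≥0∞ :=
  totVar (μ.restrict B) (E.indicator 1) B

/-- `f ∈ BV(B)`: `f ∈ L¹(μ|_B)` and `|Df|_B(B) < ∞`. -/
def MemBV (μ : Measure X) (B : Set X) (f : X → ℝ) : Prop :=
  Integrable f (μ.restrict B) ∧ totVar (μ.restrict B) f B < ⊤

/-- `‖f‖_{BV(B)} = ‖f‖_{L¹(μ|_B)} + |Df|_B(B)`. -/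
noncomputable def bvNorm (μ : Measure X) (B : Set X) (f : X → ℝ) : ℝ≥0∞ :=
  (∫⁻ x in B, ENNReal.ofReal |f x| ∂μ) + totVar (μ.restrict B) f B

/-- `B` is a `BV`-extension set. -/
def IsBVExtensionSet (μ : Measure X) (B : Set X) : Prop :=
  ∃ C : ℝ, 0 < C ∧ ∀ f : X → ℝ, MemBV μ B f →
    ∃ g : X → ℝ, MemBV μ univ g ∧ EqOn g f B ∧
      bvNorm μ univ g ≤ ENNReal.ofReal C * bvNorm μ B f

/-- The functional `M_λ(A) = Per(A) + λ m(Ω \ A)`. -/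
noncomputable def Mfun (μ : Measure X) (Ω : Set X) (lam : ℝ) (A : Set X) : ℝ≥0∞ :=
  per μ A + ENNReal.ofReal lam * μ (Ω \ A)



lemma exists_goodDeriv {F : ℝ → ℝ} (hF : Monotone F) {r : ℝ} (hr : 0 < r) (hF0 : F 0 = 0) :
    ∃ s ∈ Ioo (0:ℝ) r, ∃ L : ℝ, HasDerivAt F L s ∧
      ENNReal.ofReal L ≤ ENNReal.ofReal (F r) / ENNReal.ofReal r := by
  set ν := hF.stieltjesFunction.measure with hν
  set D : ℝ → ℝ≥0∞ := ν.rnDeriv volume with hD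
  set c : ℝ≥0∞ := ENNReal.ofReal (F r) / ENNReal.ofReal r with hc
  have hrne : ENNReal.ofReal r ≠ 0 := (ENNReal.ofReal_pos.2 hr).ne'
  have hcfin : c < ⊤ := ENNReal.div_lt_top ENNReal.ofReal_ne_top hrne
  have hcr : c * ENNReal.ofReal r = ENNReal.ofReal (F r) :=
    ENNReal.div_mul_cancel hrne ENNReal.ofReal_ne_top
  -- ν (Ioo 0 r) ≤ ofReal (F r)
  have hν1 : ν (Ioo 0 r) ≤ ENNReal.ofReal (F r) := by
    rw [hν, StieltjesFunction.measure_Ioo]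
    apply ENNReal.ofReal_le_ofReal
    have h1 : hF.stieltjesFunction 0 ≥ 0 := by
      have := hF.le_rightLim (le_refl 0)
      rw [hF0] at this
      simpa [Monotone.stieltjesFunction_eq] using this
    have h2 : Function.leftLim (↑hF.stieltjesFunction) r ≤ F r := by
      refine le_of_tendsto (hF.stieltjesFunction.mono.tendsto_leftLim r) ?_
      filter_upwards [Ioo_mem_nhdsLT_of_mem (Set.mem_Ioc.2 ⟨hr, le_refl r⟩)] with y hy
      rw [Monotone.stieltjesFunction_eq]
      exact hF.rightLim_le hy.2
    linarith
  have hint : ∫⁻ x in Ioo 0 r, D x ≤ c * ENNReal.ofReal r := by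
    rw [hcr]
    exact (Measure.setLIntegral_rnDeriv_le _).trans hν1
  -- the set of good points is not null
  have hTpos : ¬ (volume {x | x ∈ Ioo (0:ℝ) r ∧ D x ≤ c} = 0) := by
    intro h0
    set ρ := volume.restrict (Ioo (0:ℝ) r) with hρ
    have hρne : ρ ≠ 0 := by
      intro h
      have : ρ Set.univ = 0 := by rw [h]; rfl
      rw [hρ, Measure.restrict_apply_univ, Real.volume_Ioo, sub_zero] at this
      exact hrne this
    have : (MeasureTheory.ae ρ).NeBot := ae_neBot.2 hρne
    have hgt : ∀ᵐ x ∂ρ, c < D x := by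
      rw [hρ, ae_restrict_iff' measurableSet_Ioo]
      rw [MeasureTheory.ae_iff]
      convert h0 using 2
      ext x
      simp only [Set.mem_setOf_eq, not_forall, not_lt]
      tauto
    have hge : ∀ᵐ x ∂ρ, c ≤ D x := hgt.mono fun x hx => hx.le
    have heq : D =ᵐ[ρ] fun x => c + (D x - c) := hge.mono fun x hx => (add_tsub_cancel_of_le hx).symm
    have hintD : ∫⁻ x, D x ∂ρ ≤ c * ENNReal.ofReal r := hint
    rw [lintegral_congr_ae heq, lintegral_add_left measurable_const, lintegral_const,
      Measure.restrict_apply_univ, Real.volume_Ioo, sub_zero] at hintD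
    have hzero : ∫⁻ x, (D x - c) ∂ρ = 0 := by
      by_contra hne
      have h1 : 0 < ∫⁻ x, (D x - c) ∂ρ := pos_iff_ne_zero.2 hne
      have h2 : c * ENNReal.ofReal r < c * ENNReal.ofReal r + ∫⁻ x, (D x - c) ∂ρ :=
        ENNReal.lt_add_right (ENNReal.mul_ne_top hcfin.ne ENNReal.ofReal_ne_top) hne
      exact absurd hintD (not_le.2 h2)
    have hle : ∀ᵐ x ∂ρ, D x ≤ c := by
      have := (lintegral_eq_zero_iff ((Measure.measurable_rnDeriv ν volume).sub measurable_const)).1 hzero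
      exact this.mono fun x hx => tsub_eq_zero_iff_le.1 hx
    have : ∀ᵐ _x ∂ρ, False := by
      filter_upwards [hgt, hle] with x h1 h2
      exact absurd h2 (not_le.2 h1)
    exact (this.exists).elim fun _ h => h
  -- combine with a.e. differentiability
  have hae := hF.ae_hasDerivAt
  rw [MeasureTheory.ae_iff] at hae
  have hdiff : volume ({x | x ∈ Ioo (0:ℝ) r ∧ D x ≤ c} \
      {x | ¬ HasDerivAt F (D x).toReal x}) ≠ 0 := by
    rw [measure_diff_null hae]
    exact hTpos
  obtain ⟨s, hs⟩ := nonempty_of_measure_ne_zero hdiff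
  obtain ⟨⟨hsIoo, hsle⟩, hsd⟩ := hs
  refine ⟨s, hsIoo, (D s).toReal, not_not.1 hsd, ?_⟩
  rwa [ENNReal.ofReal_toReal (hsle.trans_lt hcfin).ne]

lemma lipa_le_of_lipschitzOnWith {f : X → ℝ} {x : X} {K : ℝ≥0} {r : ℝ}
    (hr : 0 < r) (h : LipschitzOnWith K f (ball x r)) : lipa f x ≤ K := by
  refine iInf_le_of_le r (iInf_le_of_le hr ?_)
  refine iSup_le fun y => iSup_le fun hy => iSup_le fun z => iSup_le fun hz => ?_
  exact ENNReal.div_le_of_le_mul (h hy hz)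

lemma lipschitzWith_ramp {Y : Type*} [PseudoMetricSpace Y] {g : Y → ℝ} (hg : LipschitzWith 1 g) (a e : ℝ) (he : 0 < e) :
    LipschitzWith (Real.toNNReal e⁻¹) (fun x => max 0 (min 1 ((g x - a) / e))) := by
  refine LipschitzWith.of_dist_le_mul fun x y => ?_
  have h1 : dist (max 0 (min 1 ((g x - a) / e))) (max 0 (min 1 ((g y - a) / e)))
      ≤ dist ((g x - a) / e) ((g y - a) / e) := by
    rw [Real.dist_eq, Real.dist_eq, max_comm 0 (min 1 ((g x - a) / e)),
      max_comm 0 (min 1 ((g y - a) / e))]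
    refine (abs_max_sub_max_le_abs _ _ _).trans ?_
    have := abs_min_sub_min_le_max (1:ℝ) ((g x - a) / e) 1 ((g y - a) / e)
    simpa using this
  refine h1.trans ?_
  have h2 : dist ((g x - a) / e) ((g y - a) / e) = dist (g x) (g y) / e := by
    rw [Real.dist_eq, Real.dist_eq, div_sub_div_same, abs_div, abs_of_pos he]
    ring_nf
  rw [h2]
  have h3 : dist (g x) (g y) ≤ dist x y := by simpa using hg.dist_le_mul x y
  rw [div_eq_inv_mul]
  calc e⁻¹ * dist (g x) (g y) ≤ e⁻¹ * dist x y := by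
        exact mul_le_mul_of_nonneg_left h3 (inv_nonneg.2 he.le)
    _ = (Real.toNNReal e⁻¹ : ℝ) * dist x y := by
        rw [Real.coe_toNNReal _ (inv_nonneg.2 he.le)]

lemma locStruct {X : Type*} [MetricSpace X] (Ω : Set X) (hΩo : IsOpen Ω)
    {s e : ℝ} (hs : 0 < s) (he : 0 < e) (hes : e < s) (x : X) :
    ∃ ρ > 0, ∃ K : ℝ≥0, LipschitzOnWith K
      (Ω.indicator (fun y => max 0 (min 1 ((infDist y (frontier Ω) - (s - e)) / e))))
      (ball x ρ) ∧ (K : ℝ≥0∞) ≤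
      (Ω ∩ {y | s - e ≤ infDist y (frontier Ω) ∧ infDist y (frontier Ω) ≤ s}).indicator
        (fun _ => ENNReal.ofReal e⁻¹) x := by
  classical
  set g : X → ℝ := fun y => infDist y (frontier Ω) with hg
  have hglip : LipschitzWith 1 g := lipschitz_infDist_pt _
  set h : X → ℝ := fun y => max 0 (min 1 ((g y - (s - e)) / e)) with hh
  set f : X → ℝ := Ω.indicator h with hf
  have hgd : ∀ y z : X, g y ≤ g z + dist y z := fun y z => infDist_le_infDist_add_dist
  by_cases hxT : x ∈ Ω ∩ {y | s - e ≤ g y ∧ g y ≤ s}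
  · -- Lipschitz case: ball inside Ω
    obtain ⟨ρ, hρ, hball⟩ := Metric.isOpen_iff.1 hΩo x hxT.1
    refine ⟨ρ, hρ, Real.toNNReal e⁻¹, fun {y} hy {z} hz => ?_, ?_⟩
    · have h1 : f y = h y := indicator_of_mem (hball hy) h
      have h2 : f z = h z := indicator_of_mem (hball hz) h
      rw [h1, h2]
      exact (lipschitzWith_ramp hglip (s - e) e he) y z
    · rw [indicator_of_mem hxT]
      rw [ENNReal.ofReal, ENNReal.coe_le_coe]
  · -- constant cases; LipschitzOnWith 0 means constant
    have hconst : ∀ ρ (c : ℝ), (∀ y ∈ ball x ρ, f y = c) → LipschitzOnWith 0 f (ball x ρ) := by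
      intro ρ c hc y hy z hz
      simp [hc y hy, hc z hz]
    suffices hex : ∃ ρ > 0, LipschitzOnWith 0 f (ball x ρ) by
      obtain ⟨ρ, hρ, hl⟩ := hex
      exact ⟨ρ, hρ, 0, hl, by simp⟩
    by_cases hga : g x < s - e
    · refine ⟨s - e - g x, by linarith, hconst _ 0 fun y hy => ?_⟩
      have hgy : g y < s - e := by
        have := hgd y x
        rw [mem_ball] at hy
        linarith
      have hhy : h y = 0 := by
        have : (g y - (s - e)) / e ≤ 0 := div_nonpos_of_nonpos_of_nonneg (by linarith) he.le
        simp only [hh]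
        rw [max_eq_left]
        exact (min_le_right _ _).trans this
      by_cases hyΩ : y ∈ Ω
      · rw [hf, indicator_of_mem hyΩ, hhy]
      · rw [hf, indicator_of_notMem hyΩ]
    · push_neg at hga
      by_cases hxΩ : x ∈ Ω
      · -- then g x > s, constant 1
        have hgxs : s < g x := by
          rcases lt_or_ge s (g x) with h' | h'
          · exact h'
          · exact absurd ⟨hxΩ, hga, h'⟩ hxT
        obtain ⟨ρ₀, hρ₀, hball⟩ := Metric.isOpen_iff.1 hΩo x hxΩ
        refine ⟨min ρ₀ (g x - s), lt_min hρ₀ (by linarith), hconst _ 1 fun y hy => ?_⟩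
        rw [mem_ball, lt_min_iff] at hy
        have hyΩ : y ∈ Ω := hball (mem_ball.2 hy.1)
        have hgy : s < g y := by
          have := hgd x y
          rw [dist_comm] at this
          linarith [hy.2]
        have h1 : (1:ℝ) ≤ (g y - (s - e)) / e := (one_le_div he).2 (by linarith)
        rw [hf, indicator_of_mem hyΩ, hh]
        simp only
        rw [min_eq_left h1, max_eq_right zero_le_one]
      · -- x ∉ Ω with g x ≥ s - e > 0 : x ∉ closure Ω
        have hxcl : x ∉ closure Ω := by
          intro hcl
          have hfr : x ∈ frontier Ω := ⟨hcl, by rwa [hΩo.interior_eq]⟩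
          have : g x = 0 := infDist_zero_of_mem hfr
          linarith
        obtain ⟨ρ, hρ, hball⟩ :=
          Metric.isOpen_iff.1 isClosed_closure.isOpen_compl x hxcl
        refine ⟨ρ, hρ, hconst _ 0 fun y hy => ?_⟩
        have hyΩ : y ∉ Ω := fun hyΩ => hball hy (subset_closure hyΩ)
        rw [hf, indicator_of_notMem hyΩ]

/-- For a bounded open `Ω` with nonempty boundary: for every `r > 0` there is
`s ∈ (0, r]` with `Per(Ω \ B(∂Ω, s)) ≤ m_r / r`; in particular for every `λ > 0` the infimum
of `M_λ` over closed subsets of `Ω` is finite, being at most `m_r / r + λ m_r`. -/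
theorem inf_Mlam_finite
    {X : Type*} [MetricSpace X] [CompleteSpace X] [TopologicalSpace.SeparableSpace X]
    [MeasurableSpace X] [BorelSpace X] (μ : Measure X)
    (hμ : ∀ s : Set X, Bornology.IsBounded s → μ s < ⊤)
    (Ω : Set X) (hΩo : IsOpen Ω) (hΩb : Bornology.IsBounded Ω)
    (hfr : (frontier Ω).Nonempty) :
    (∀ r : ℝ, 0 < r → ∃ s : ℝ, 0 < s ∧ s ≤ r ∧
        per μ (Ω \ Metric.thickening s (frontier Ω)) ≤
          μ (Ω ∩ Metric.thickening r (frontier Ω)) / ENNReal.ofReal r) ∧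
    (∀ lam : ℝ, 0 < lam → ∀ r : ℝ, 0 < r →
        (⨅ (A : Set X) (_ : IsClosed A) (_ : A ⊆ Ω), Mfun μ Ω lam A) ≤
            μ (Ω ∩ Metric.thickening r (frontier Ω)) / ENNReal.ofReal r +
              ENNReal.ofReal lam * μ (Ω ∩ Metric.thickening r (frontier Ω)) ∧
        (⨅ (A : Set X) (_ : IsClosed A) (_ : A ⊆ Ω), Mfun μ Ω lam A) < ⊤) := by
  classical
  have hμΩ : μ Ω < ⊤ := hμ Ω hΩb
  have hfin : ∀ S : Set X, S ⊆ Ω → μ S < ⊤ := fun S hS => lt_of_le_of_lt (measure_mono hS) hμΩ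
  set g : X → ℝ := fun x => infDist x (frontier Ω) with hgdef
  have hgc : Continuous g := (lipschitz_infDist_pt _).continuous
  have hthick : ∀ t : ℝ, thickening t (frontier Ω) = {x | g x < t} := fun t => by
    ext x; exact mem_thickening_iff_infDist_lt hfr
  have main : ∀ r : ℝ, 0 < r → ∃ s : ℝ, 0 < s ∧ s ≤ r ∧
      per μ (Ω \ Metric.thickening s (frontier Ω)) ≤
        μ (Ω ∩ Metric.thickening r (frontier Ω)) / ENNReal.ofReal r := by
    intro r hr
    set Fm : ℝ → ℝ := fun t => (μ (Ω ∩ {x | g x < t})).toReal with hFmdef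
    have hFmono : Monotone Fm := fun a b hab =>
      ENNReal.toReal_mono (hfin _ inter_subset_left).ne
        (measure_mono (inter_subset_inter_right _ fun x hx => lt_of_lt_of_le hx hab))
    have hF0 : Fm 0 = 0 := by
      have hempty : Ω ∩ {x | g x < 0} = ∅ := by
        ext x
        simp only [mem_inter_iff, mem_setOf_eq, mem_empty_iff_false, iff_false, not_and, not_lt]
        exact fun _ => infDist_nonneg
      simp [hFmdef, hempty]
    obtain ⟨s, hsIoo, L, hL, hLle⟩ := exists_goodDeriv hFmono hr hF0
    obtain ⟨hs0, hsr⟩ := hsIoo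
    set E := Ω \ thickening s (frontier Ω) with hEdef
    refine ⟨s, hs0, hsr.le, ?_⟩
    -- the approximating sequence
    set ε : ℕ → ℝ := fun n => s / (2 * (n + 1)) with hεdef
    have hεpos : ∀ n : ℕ, 0 < ε n := fun n => by positivity
    have hεlt : ∀ n : ℕ, ε n < s := fun n => by
      have h1 : (0:ℝ) ≤ (n : ℝ) := Nat.cast_nonneg n
      rw [hεdef]
      exact div_lt_self hs0 (by linarith)
    have hεto : Tendsto ε atTop (𝓝 0) := by
      have h2 : Tendsto (fun n : ℕ => 2 * ((n : ℝ) + 1)) atTop atTop := by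
        refine Tendsto.const_mul_atTop two_pos ?_
        exact tendsto_atTop_add_const_right atTop 1 tendsto_natCast_atTop_atTop
      exact tendsto_const_nhds.div_atTop h2
    set fseq : ℕ → X → ℝ :=
      fun n => Ω.indicator (fun y => max 0 (min 1 ((g y - (s - ε n)) / ε n))) with hfseqdef
    set T : ℕ → Set X := fun n => Ω ∩ {y | s - ε n ≤ g y ∧ g y ≤ s} with hTdef
    have hlips : ∀ n x, ∃ ρ > 0, ∃ K : ℝ≥0, LipschitzOnWith K (fseq n) (ball x ρ) ∧
        (K : ℝ≥0∞) ≤ (T n).indicator (fun _ => ENNReal.ofReal (ε n)⁻¹) x := fun n x =>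
      locStruct Ω hΩo hs0 (hεpos n) (hεlt n) x
    -- pointwise convergence
    have hpt : ∀ x, Tendsto (fun n => fseq n x) atTop (𝓝 (E.indicator (1 : X → ℝ) x)) := by
      intro x
      by_cases hxΩ : x ∈ Ω
      · by_cases hxs : s ≤ g x
        · have hxE : x ∈ E := by
            refine ⟨hxΩ, ?_⟩
            rw [hthick s]
            simpa using not_lt.2 hxs
          have hval : ∀ n, fseq n x = 1 := fun n => by
            have h1 : (1:ℝ) ≤ (g x - (s - ε n)) / (ε n) :=
              (one_le_div (hεpos n)).2 (by linarith [hεpos n])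
            simp only [hfseqdef]
            simp only [indicator_of_mem hxΩ]
            rw [min_eq_left h1, max_eq_right zero_le_one]
          rw [indicator_of_mem hxE]
          simp only [Pi.one_apply]
          exact tendsto_const_nhds.congr fun n => (hval n).symm
        · push_neg at hxs
          have hxE : x ∉ E := by
            intro hx
            apply hx.2
            rw [hthick s]
            exact hxs
          have hev : ∀ᶠ n in atTop, fseq n x = 0 := by
            filter_upwards [hεto.eventually_lt_const (by linarith : (0:ℝ) < s - g x)] with n hn
            have h1 : (g x - (s - ε n)) / ε n ≤ 0 :=
              div_nonpos_of_nonpos_of_nonneg (by linarith) (hεpos n).le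
            simp only [hfseqdef]
            simp only [indicator_of_mem hxΩ]
            rw [max_eq_left ((min_le_right _ _).trans h1)]
          rw [indicator_of_notMem hxE]
          exact tendsto_const_nhds.congr' (hev.mono fun n hn => hn.symm)
      · have hxE : x ∉ E := fun hx => hxΩ hx.1
        rw [indicator_of_notMem hxE]
        have hval : ∀ n, fseq n x = 0 := fun n => by
          simp only [hfseqdef]; exact indicator_of_notMem hxΩ _
        exact tendsto_const_nhds.congr fun n => (hval n).symm
    -- measurability
    have hmeasf : ∀ n, Measurable (fseq n) := fun n => by
      have hc : Continuous fun y => max 0 (min 1 ((g y - (s - ε n)) / ε n)) :=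
        (continuous_const.max (continuous_const.min ((hgc.sub continuous_const).div_const _)))
      exact hc.measurable.indicator hΩo.measurableSet
    have hmeasE : MeasurableSet E := hΩo.measurableSet.diff isOpen_thickening.measurableSet
    have hmeasχ : Measurable (E.indicator (1 : X → ℝ)) := measurable_one.indicator hmeasE
    -- values in [0,1]
    have hf01 : ∀ n x, 0 ≤ fseq n x ∧ fseq n x ≤ 1 := fun n x => by
      by_cases h : x ∈ Ω
      · simp only [hfseqdef]
        simp only [indicator_of_mem h]
        exact ⟨le_max_left _ _, max_le zero_le_one (min_le_left _ _)⟩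
      · simp only [hfseqdef, indicator_of_notMem h]
        exact ⟨le_refl _, zero_le_one⟩
    have hχ01 : ∀ x, 0 ≤ E.indicator (1 : X → ℝ) x ∧ E.indicator (1 : X → ℝ) x ≤ 1 := fun x => by
      by_cases h : x ∈ E
      · rw [indicator_of_mem h]; exact ⟨zero_le_one, le_refl _⟩
      · rw [indicator_of_notMem h]; exact ⟨le_refl _, zero_le_one⟩
    -- L1loc convergence
    have hL1 : TendstoL1loc (μ.restrict univ) fseq (E.indicator 1) := by
      intro S hS
      simp only [Measure.restrict_univ]
      have hdct := tendsto_lintegral_of_dominated_convergence (μ := μ.restrict S)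
        (F := fun n x => ENNReal.ofReal |fseq n x - E.indicator (1:X→ℝ) x|)
        (f := fun _ => 0) (bound := fun _ => 1)
        (fun n => (((hmeasf n).sub hmeasχ).abs).ennreal_ofReal)
        (fun n => Eventually.of_forall fun x => by
          have h1 := hf01 n x
          have h2 := hχ01 x
          refine ENNReal.ofReal_le_one.2 (abs_le.2 ⟨by linarith [h1.1, h2.2], by linarith [h1.2, h2.1]⟩))
        (by
          rw [lintegral_one, Measure.restrict_apply_univ]
          exact (hμ S hS).ne)
        (Eventually.of_forall fun x => by
          have h1 : Tendsto (fun n => fseq n x - E.indicator (1:X→ℝ) x) atTop (𝓝 0) := by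
            simpa using (hpt x).sub_const (E.indicator (1:X→ℝ) x)
          have h2 := (continuous_abs.tendsto (0:ℝ)).comp h1
          rw [abs_zero] at h2
          have h3 := (ENNReal.continuous_ofReal.tendsto 0).comp h2
          rw [ENNReal.ofReal_zero] at h3
          exact h3)
      simpa using hdct
    -- local Lipschitz
    have hloc : ∀ n, LocLipOn (fseq n) univ := by
      intro n x _
      obtain ⟨ρ, hρ, K, hK, _⟩ := hlips n x
      exact ⟨ρ, hρ, subset_univ _, K, hK⟩
    -- integral bound
    have hTmeas : ∀ n, MeasurableSet (T n) := fun n => by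
      rw [hTdef]
      have h1 : MeasurableSet {y : X | s - ε n ≤ g y ∧ g y ≤ s} :=
        (measurableSet_le measurable_const hgc.measurable).inter
          (measurableSet_le hgc.measurable measurable_const)
      exact hΩo.measurableSet.inter h1
    have hlipa : ∀ n x, lipa (fseq n) x ≤ (T n).indicator (fun _ => ENNReal.ofReal (ε n)⁻¹) x := by
      intro n x
      obtain ⟨ρ, hρ, K, hK, hKle⟩ := hlips n x
      exact (lipa_le_of_lipschitzOnWith hρ hK).trans hKle
    have hint : ∀ n, ∫⁻ x, lipa (fseq n) x ∂μ ≤ ENNReal.ofReal (ε n)⁻¹ * μ (T n) := fun n => by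
      calc ∫⁻ x, lipa (fseq n) x ∂μ
          ≤ ∫⁻ x, (T n).indicator (fun _ => ENNReal.ofReal (ε n)⁻¹) x ∂μ :=
            lintegral_mono (hlipa n)
        _ = ENNReal.ofReal (ε n)⁻¹ * μ (T n) := by
            rw [lintegral_indicator (hTmeas n), setLIntegral_const]
    -- measure of the transition strip
    have hTsub : ∀ n, μ (T n) ≤ ENNReal.ofReal (Fm s - Fm (s - ε n)) := by
      intro n
      have hQfin : μ (Ω ∩ {x | g x ≤ s}) < ⊤ := hfin _ inter_subset_left
      have hQle : (μ (Ω ∩ {x | g x ≤ s})).toReal ≤ Fm s := by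
        have hq1 : ∀ δ : ℝ, 0 < δ → (μ (Ω ∩ {x | g x ≤ s})).toReal ≤ Fm (s + δ) := fun δ hδ =>
          ENNReal.toReal_mono (hfin _ inter_subset_left).ne
            (measure_mono (inter_subset_inter_right _ fun x hx => by
              simp only [mem_setOf_eq] at hx ⊢
              linarith))
        have hcont : ContinuousAt Fm s := hL.continuousAt
        have htt : Tendsto (fun k : ℕ => Fm (s + 1 / (k + 1))) atTop (𝓝 (Fm s)) := by
          refine hcont.tendsto.comp ?_
          have h2 : Tendsto (fun k : ℕ => s + 1 / ((k : ℝ) + 1)) atTop (𝓝 (s + 0)) :=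
            tendsto_const_nhds.add tendsto_one_div_add_atTop_nhds_zero_nat
          simpa using h2
        exact ge_of_tendsto htt (Eventually.of_forall fun k => hq1 _ (by positivity))
      have hdisj : Disjoint (T n) (Ω ∩ {x | g x < s - ε n}) := by
        rw [Set.disjoint_left]
        rintro x ⟨_, hx1, _⟩ ⟨_, hx2⟩
        exact absurd hx2 (not_lt.2 hx1)
      have hm2 : MeasurableSet (Ω ∩ {x | g x < s - ε n}) :=
        hΩo.measurableSet.inter (measurableSet_lt hgc.measurable measurable_const)
      have hadd : μ (T n) + μ (Ω ∩ {x | g x < s - ε n}) ≤ μ (Ω ∩ {x | g x ≤ s}) := by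
        rw [← measure_union hdisj hm2]
        refine measure_mono ?_
        rintro x (⟨hx1, hx2, hx3⟩ | ⟨hx1, hx2⟩)
        · exact ⟨hx1, hx3⟩
        · simp only [mem_setOf_eq] at hx2
          refine ⟨hx1, ?_⟩
          show g x ≤ s
          linarith [hεpos n]
      have hTfin : μ (T n) < ⊤ := hfin _ inter_subset_left
      have hBfin : μ (Ω ∩ {x | g x < s - ε n}) < ⊤ := hfin _ inter_subset_left
      have h1 : (μ (T n)).toReal + Fm (s - ε n) ≤ (μ (Ω ∩ {x | g x ≤ s})).toReal := by
        rw [hFmdef]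
        rw [← ENNReal.toReal_add hTfin.ne hBfin.ne]
        exact ENNReal.toReal_mono hQfin.ne hadd
      have h2 : (μ (T n)).toReal ≤ Fm s - Fm (s - ε n) := by linarith
      calc μ (T n) = ENNReal.ofReal (μ (T n)).toReal := (ENNReal.ofReal_toReal hTfin.ne).symm
        _ ≤ ENNReal.ofReal (Fm s - Fm (s - ε n)) := ENNReal.ofReal_le_ofReal h2
    -- convergence of difference quotients
    have hqconv : Tendsto (fun n => (Fm s - Fm (s - ε n)) / ε n) atTop (𝓝 L) := by
      have hslope := hasDerivAt_iff_tendsto_slope.1 hL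
      have hu : Tendsto (fun n => s - ε n) atTop (𝓝[≠] s) := by
        apply tendsto_nhdsWithin_of_tendsto_nhds_of_eventually_within
        · have h1 : Tendsto (fun n => s - ε n) atTop (𝓝 (s - 0)) :=
            tendsto_const_nhds.sub hεto
          simpa using h1
        · exact Eventually.of_forall fun n => by
            simp only [mem_compl_iff, mem_singleton_iff]
            have := hεpos n
            intro h
            nlinarith [sub_eq_self.1 h]
      have hcomp := hslope.comp hu
      refine hcomp.congr fun n => ?_
      show slope Fm s (s - ε n) = (Fm s - Fm (s - ε n)) / ε n
      rw [slope_def_field]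
      rw [show s - ε n - s = -ε n by ring, div_neg, ← neg_div, neg_sub]
    have hofq : Tendsto (fun n => ENNReal.ofReal ((Fm s - Fm (s - ε n)) / ε n)) atTop
        (𝓝 (ENNReal.ofReal L)) :=
      (ENNReal.continuous_ofReal.tendsto L).comp hqconv
    -- liminf bound
    have hliminf : Filter.liminf (fun n => ∫⁻ x, lipa (fseq n) x ∂μ) atTop ≤ ENNReal.ofReal L := by
      rw [← hofq.liminf_eq]
      refine liminf_le_liminf (Eventually.of_forall fun n => ?_)
      refine (hint n).trans ((mul_le_mul_right (hTsub n) _).trans ?_)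
      rw [← ENNReal.ofReal_mul (inv_nonneg.2 (hεpos n).le)]
      apply ENNReal.ofReal_le_ofReal
      rw [inv_mul_eq_div]
    -- perimeter bound via the definition
    have hper : per μ E ≤ Filter.liminf (fun n => ∫⁻ x, lipa (fseq n) x ∂μ) atTop := by
      have h1 : totVarOpen μ (E.indicator 1) univ ≤
          Filter.liminf (fun n => ∫⁻ x in univ, lipa (fseq n) x ∂μ) atTop :=
        iInf_le_of_le fseq (iInf_le_of_le hloc (iInf_le_of_le hL1 le_rfl))
      have h2 : per μ E ≤ totVarOpen μ (E.indicator 1) univ :=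
        iInf_le_of_le univ (iInf_le_of_le isOpen_univ (iInf_le_of_le (subset_refl _) le_rfl))
      refine h2.trans (h1.trans (le_of_eq ?_))
      simp only [Measure.restrict_univ]
    -- conclude
    have hFr : ENNReal.ofReal (Fm r) = μ (Ω ∩ Metric.thickening r (frontier Ω)) := by
      rw [hthick r, hFmdef]
      exact ENNReal.ofReal_toReal (hfin _ inter_subset_left).ne
    calc per μ E ≤ ENNReal.ofReal L := hper.trans hliminf
      _ ≤ ENNReal.ofReal (Fm r) / ENNReal.ofReal r := hLle
      _ = μ (Ω ∩ Metric.thickening r (frontier Ω)) / ENNReal.ofReal r := by rw [hFr]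
  refine ⟨main, ?_⟩
  intro lam hlam r hr
  obtain ⟨s, hs0, hsr, hper⟩ := main r hr
  set A := Ω \ thickening s (frontier Ω) with hAdef
  have hAsub : A ⊆ Ω := diff_subset
  have hAclosed : IsClosed A := by
    rw [← closure_subset_iff_isClosed]
    intro x hx
    have hsub2 : closure A ⊆ closure Ω ∩ (thickening s (frontier Ω))ᶜ := by
      refine closure_minimal (fun y hy => ⟨subset_closure hy.1, hy.2⟩) ?_
      exact isClosed_closure.inter isOpen_thickening.isClosed_compl
    obtain ⟨hx1, hx2⟩ := hsub2 hx
    by_cases hxΩ : x ∈ Ω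
    · exact ⟨hxΩ, hx2⟩
    · exfalso
      apply hx2
      have hxf : x ∈ frontier Ω := ⟨hx1, by rwa [hΩo.interior_eq]⟩
      rw [hthick s]
      show g x < s
      rw [hgdef]
      simp only
      rw [infDist_zero_of_mem hxf]
      exact hs0
  have hdiff : Ω \ A ⊆ Ω ∩ Metric.thickening r (frontier Ω) := by
    rintro x ⟨hxΩ, hxA⟩
    refine ⟨hxΩ, ?_⟩
    have hx : x ∈ thickening s (frontier Ω) := by
      by_contra h
      exact hxA ⟨hxΩ, h⟩
    exact thickening_mono hsr _ hx
  have hMle : Mfun μ Ω lam A ≤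
      μ (Ω ∩ Metric.thickening r (frontier Ω)) / ENNReal.ofReal r +
        ENNReal.ofReal lam * μ (Ω ∩ Metric.thickening r (frontier Ω)) := by
    unfold Mfun
    exact add_le_add hper (mul_le_mul_right (measure_mono hdiff) _)
  have hinf : (⨅ (A : Set X) (_ : IsClosed A) (_ : A ⊆ Ω), Mfun μ Ω lam A) ≤
      Mfun μ Ω lam A :=
    iInf_le_of_le A (iInf_le_of_le hAclosed (iInf_le_of_le hAsub le_rfl))
  have hmrfin : μ (Ω ∩ Metric.thickening r (frontier Ω)) < ⊤ := hfin _ inter_subset_left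
  refine ⟨hinf.trans hMle, lt_of_le_of_lt (hinf.trans hMle) ?_⟩
  have h1 : μ (Ω ∩ Metric.thickening r (frontier Ω)) / ENNReal.ofReal r < ⊤ :=
    ENNReal.div_lt_top hmrfin.ne (ENNReal.ofReal_pos.2 hr).ne'
  have h2 : ENNReal.ofReal lam * μ (Ω ∩ Metric.thickening r (frontier Ω)) < ⊤ :=
    ENNReal.mul_lt_top ENNReal.ofReal_lt_top hmrfin
  exact ENNReal.add_lt_top.2 ⟨h1, h2⟩
end

section
/- Let Ω ⊆ X be a bounded open set and λ > 0. Set M_λ(A) := Per(A) + λ·m(Ω ∖ A) for A ⊆ Ω, and 𝒞_{Ω,λ} := { A ⊆ Ω closed : M_λ(A) < ∞ }. Define on 𝒞_{Ω,λ} the relation A ≺_λ B if and only if m(A ∖ B) = 0 and M_λ(A) ≤ M_λ(B). Then: (i) every nonincreasing sequence (A_i) in 𝒞_{Ω,λ} satisfies M_λ(⋂_i A_i) ≤ liminf_i M_λ(A_i); (ii) for every C ∈ 𝒞_{Ω,λ}, the set { A ∈ 𝒞_{Ω,λ} : A ≺_λ C } contains a minimal element with respect to ≺_λ, i.e., an element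 G with G ≺_λ C such that every A ∈ 𝒞_{Ω,λ} with A ≺_λ G satisfies G ≺_λ A. -/
open MeasureTheory Metric Set Filter ENNReal NNReal Topology

variable {X : Type*} [PseudoMetricSpace X] [MeasurableSpace X]

/-!
For (i), the indicators of a nonincreasing sequence of closed sets converge in `L¹_loc` to the
indicator of the intersection, and the total variation is lower semicontinuous under `L¹_loc`
convergence: a diagonal choice among the Lipschitz approximations defining `|Dχ_{A_i}|_X(X)`
approximates `χ_{⋂ A_i}`. The volume term is continuous along the increasing sets `Ω \ A_i`.

For (ii), `≺_λ` is a preorder on `𝒞_{Ω,λ}` in which every descending chain is bounded below by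
its intersection: replacing each `A_n` by `⋂_{m ≤ n} A_m` changes nothing up to null sets and makes
(i) applicable. Since `A ↦ m(A)` is `≺_λ`-monotone, the Brezis–Browder ordering principle yields
`G ≺_λ C` with `m(A) = m(G)` for all `A ≺_λ G`. As `m(G) < ∞`, such an `A` agrees with `G` up to a
null set, so `M_λ(A) = M_λ(G)` and `G ≺_λ A`.
-/

theorem Monotone.exists_le_forall_le_apply_eq {α : Type*} [Preorder α] {Φ : α → ℝ≥0∞}
    (hΦ : Monotone Φ) (hbdd : ∀ x : ℕ → α, Antitone x → BddBelow (range x)) (a : α) :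
    ∃ b ≤ a, ∀ c ≤ b, Φ c = Φ b := by
  have hstep : ∀ (n : ℕ) (a : α), ∃ b ≤ a, Φ b ≤ (⨅ c ≤ a, Φ c) + (n : ℝ≥0∞)⁻¹ := by
    intro n a
    by_cases htop : (⨅ c ≤ a, Φ c) = ⊤
    · exact ⟨a, le_rfl, by simp [htop]⟩
    obtain ⟨b, hb, hlt⟩ : ∃ b ≤ a, Φ b < (⨅ c ≤ a, Φ c) + (n : ℝ≥0∞)⁻¹ := by
      simpa [iInf_lt_iff] using
        ENNReal.lt_add_right htop (ENNReal.inv_ne_zero.2 (ENNReal.natCast_ne_top n))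
    exact ⟨b, hb, hlt.le⟩
  choose next hnext_le hnext using hstep
  let x : ℕ → α := fun n => Nat.rec (motive := fun _ => α) a next n
  have hx : Antitone x := antitone_nat_of_succ_le fun n => hnext_le n (x n)
  obtain ⟨b, hb⟩ := hbdd x hx
  have hbx : ∀ n, b ≤ x n := fun n => hb (mem_range_self n)
  refine ⟨b, hbx 0, fun c hc => le_antisymm (hΦ hc) ?_⟩
  refine ge_of_tendsto' (by simpa using tendsto_const_nhds.add ENNReal.tendsto_inv_nat_nhds_zero)
    fun n => ?_
  calc Φ b ≤ Φ (x (n + 1)) := hΦ (hbx (n + 1))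
    _ ≤ (⨅ c' ≤ x n, Φ c') + (n : ℝ≥0∞)⁻¹ := hnext n (x n)
    _ ≤ Φ c + (n : ℝ≥0∞)⁻¹ := add_le_add_left (iInf₂_le c (hc.trans (hbx n) : c ≤ x n)) _

theorem ENNReal.liminf_add_liminf_le (u v : ℕ → ℝ≥0∞) :
    atTop.liminf u + atTop.liminf v ≤ atTop.liminf (u + v) := by
  have hmono : ∀ w : ℕ → ℝ≥0∞, Monotone fun n => ⨅ i ≥ n, w i := fun w a b hab =>
    le_iInf₂ fun i hi => iInf₂_le i (hab.trans hi)
  simp only [liminf_eq_iSup_iInf_of_nat, ENNReal.iSup_add_iSup_of_monotone (hmono u) (hmono v)]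
  exact iSup_mono fun n => le_iInf₂ fun i hi => add_le_add (iInf₂_le i hi) (iInf₂_le i hi)

theorem LocLipOn.continuous {Y : Type*} [PseudoMetricSpace Y] {f : Y → ℝ}
    (h : LocLipOn f univ) : Continuous f :=
  continuous_iff_continuousAt.2 fun x => by
    obtain ⟨r, hr, -, K, hK⟩ := h x (mem_univ x)
    exact hK.continuousOn.continuousAt (ball_mem_nhds x hr)

theorem totVar_univ (μ : Measure X) (f : X → ℝ) : totVar μ f univ = totVarOpen μ f univ :=
  le_antisymm (iInf_le_of_le univ (iInf_le_of_le isOpen_univ (iInf_le _ subset_rfl)))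
    (le_iInf fun _ => le_iInf fun _ => le_iInf fun hA => by rw [univ_subset_iff.1 hA])

theorem tendstoL1loc_congr_right {ν : Measure X} {f g : X → ℝ} (h : f =ᵐ[ν] g)
    (fn : ℕ → X → ℝ) : TendstoL1loc ν fn f ↔ TendstoL1loc ν fn g := by
  have key : ∀ n S, ∫⁻ x in S, ENNReal.ofReal |fn n x - f x| ∂ν
      = ∫⁻ x in S, ENNReal.ofReal |fn n x - g x| ∂ν :=
    fun n S => lintegral_congr_ae (ae_restrict_of_ae (h.mono fun x hx => by simp only [hx]))
  simp only [TendstoL1loc, key]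

theorem totVar_congr_ae {μ : Measure X} {f g : X → ℝ} (h : f =ᵐ[μ] g) (B : Set X) :
    totVar μ f B = totVar μ g B := by
  simp only [totVar, totVarOpen, tendstoL1loc_congr_right (ae_restrict_of_ae h)]

theorem per_congr_ae {μ : Measure X} {E F : Set X} (h : E =ᵐ[μ] F) : per μ E = per μ F :=
  totVar_congr_ae (indicator_ae_eq_of_ae_eq_set h) univ

theorem Mfun_congr_ae {μ : Measure X} {Ω : Set X} {lam : ℝ} {A B : Set X} (h : A =ᵐ[μ] B) :
    Mfun μ Ω lam A = Mfun μ Ω lam B := by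
  rw [Mfun, Mfun, per_congr_ae h, measure_congr ((EventuallyEq.refl _ Ω).diff h)]

theorem totVarOpen_univ_le_liminf {μ : Measure X} {f : X → ℝ} {fn : ℕ → X → ℝ}
    (hlip : ∀ n, LocLipOn (fn n) univ) (hconv : TendstoL1loc μ fn f) :
    totVarOpen μ f univ ≤ atTop.liminf fun n => ∫⁻ x, lipa (fn n) x ∂μ := by
  rw [← Measure.restrict_univ (μ := μ)] at hconv
  refine iInf₂_le_of_le fn hlip (iInf_le_of_le hconv ?_)
  simp only [Measure.restrict_univ, le_rfl]

theorem totVarOpen_univ_of_isEmpty [IsEmpty X] (μ : Measure X) (f : X → ℝ) :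
    totVarOpen μ f univ = 0 := by
  have h := totVarOpen_univ_le_liminf (μ := μ) (f := f) (fn := fun _ => f)
    (fun _ x => isEmptyElim x) fun _ _ => by simp [lintegral_of_isEmpty]
  simpa [lintegral_of_isEmpty] using h

theorem exists_locLipOn_approx {μ : Measure X} {h : X → ℝ} {c : ℝ≥0∞}
    (hc : totVarOpen μ h univ < c) {S : Set X} (hS : Bornology.IsBounded S) {δ : ℝ≥0∞}
    (hδ : 0 < δ) : ∃ g, LocLipOn g univ ∧ ∫⁻ x, lipa g x ∂μ < c ∧
      ∫⁻ x in S, ENNReal.ofReal |g x - h x| ∂μ < δ := by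
  simp only [totVarOpen, iInf_lt_iff, Measure.restrict_univ] at hc
  obtain ⟨fn, hlip, hconv, hlt⟩ := hc
  obtain ⟨n, hn, hnS⟩ := ((frequently_lt_of_liminf_lt (by isBoundedDefault) hlt).and_eventually
    ((hconv S hS).eventually_lt_const hδ)).exists
  exact ⟨fn n, hlip n, hn, hnS⟩

theorem TendstoL1loc.of_close {μ : Measure X} {g h : ℕ → X → ℝ} {f : X → ℝ}
    (hh : TendstoL1loc μ h f) (hg : ∀ k, Measurable (g k)) (hhm : ∀ k, Measurable (h k))
    (hgh : ∀ S, Bornology.IsBounded S →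
      Tendsto (fun k => ∫⁻ x in S, ENNReal.ofReal |g k x - h k x| ∂μ) atTop (𝓝 0)) :
    TendstoL1loc μ g f := by
  intro S hS
  refine tendsto_of_tendsto_of_tendsto_of_le_of_le tendsto_const_nhds
    (by simpa using (hgh S hS).add (hh S hS)) (fun _ => zero_le) fun k => ?_
  calc ∫⁻ x in S, ENNReal.ofReal |g k x - f x| ∂μ
      ≤ ∫⁻ x in S, (ENNReal.ofReal |g k x - h k x| + ENNReal.ofReal |h k x - f x|) ∂μ :=
        lintegral_mono fun x =>
          (ENNReal.ofReal_le_ofReal (abs_sub_le _ _ _)).trans ENNReal.ofReal_add_le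
    _ = _ := lintegral_add_left ((hg k).sub (hhm k)).abs.ennreal_ofReal _

theorem totVarOpen_univ_le_liminf_of_tendstoL1loc [OpensMeasurableSpace X] {μ : Measure X}
    {f : X → ℝ} {fs : ℕ → X → ℝ} (hfs : ∀ i, Measurable (fs i))
    (hconv : TendstoL1loc μ fs f) :
    totVarOpen μ f univ ≤ atTop.liminf fun i => totVarOpen μ (fs i) univ := by
  rcases isEmpty_or_nonempty X with _ | ⟨⟨x₀⟩⟩
  · simp [totVarOpen_univ_of_isEmpty]
  refine ENNReal.le_of_forall_pos_le_add fun ε hε hL => ?_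
  obtain ⟨φ, hφ, hφlt⟩ := extraction_of_frequently_atTop (frequently_lt_of_liminf_lt
    (by isBoundedDefault) (ENNReal.lt_add_right hL.ne (ENNReal.coe_ne_zero.2 hε.ne')))
  -- Diagonal choice: `g k` is `1/k`-close to `fs (φ k)` on the ball of radius `k`.
  choose g hlip hlipa hclose using fun k : ℕ => exists_locLipOn_approx (hφlt k)
    (isBounded_ball (x := x₀) (r := k)) (ENNReal.inv_pos.2 (ENNReal.natCast_ne_top k))
  have hgconv : TendstoL1loc μ g f := by
    refine TendstoL1loc.of_close (fun S hS => (hconv S hS).comp hφ.tendsto_atTop)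
      (fun k => (hlip k).continuous.measurable) (fun k => hfs (φ k)) fun S hS => ?_
    obtain ⟨r, hr⟩ := hS.subset_closedBall x₀
    refine tendsto_of_tendsto_of_tendsto_of_le_of_le' tendsto_const_nhds
      ENNReal.tendsto_inv_nat_nhds_zero (Eventually.of_forall fun _ => zero_le) ?_
    filter_upwards [(tendsto_natCast_atTop_atTop (R := ℝ)).eventually_gt_atTop r] with k hk
    exact (lintegral_mono_set (hr.trans (closedBall_subset_ball hk))).trans (hclose k).le
  exact (totVarOpen_univ_le_liminf hlip hgconv).trans
    (liminf_le_of_frequently_le' (Frequently.of_forall fun k => (hlipa k).le))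

theorem tendstoL1loc_indicator_iInter {μ : Measure X}
    (hμ : ∀ s : Set X, Bornology.IsBounded s → μ s < ⊤) {A : ℕ → Set X}
    (hA : ∀ i, MeasurableSet (A i)) (hanti : Antitone A) :
    TendstoL1loc μ (fun i => (A i).indicator 1) ((⋂ i, A i).indicator 1) := by
  intro S hS
  set I := ⋂ i, A i
  have hIA : ∀ i, I ⊆ A i := iInter_subset A
  have hpt : ∀ i x, ENNReal.ofReal |(A i).indicator (1 : X → ℝ) x - I.indicator 1 x|
      = (A i \ I).indicator 1 x := by
    intro i x
    by_cases hxI : x ∈ I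
    · simp [hxI, hIA i hxI]
    · by_cases hxA : x ∈ A i <;> simp [hxI, hxA]
  have hI : MeasurableSet I := MeasurableSet.iInter hA
  have : IsFiniteMeasure (μ.restrict S) := isFiniteMeasure_restrict.2 (hμ S hS).ne
  have hlim : Tendsto (fun i => μ.restrict S (A i \ I)) atTop
      (𝓝 (μ.restrict S (⋂ i, A i \ I))) :=
    tendsto_measure_iInter_atTop (fun i => ((hA i).diff hI).nullMeasurableSet)
      (fun i j hij => sdiff_subset_sdiff_left (hanti hij)) ⟨0, measure_ne_top _ _⟩
  have hempty : (⋂ i, A i \ I) = ∅ := eq_empty_of_forall_notMem fun x hx =>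
    (mem_iInter.1 hx 0).2 (mem_iInter.2 fun i => (mem_iInter.1 hx i).1)
  simpa [hpt, lintegral_indicator_one ((hA _).diff hI), hempty] using hlim

theorem Mfun_iInter_le_liminf [OpensMeasurableSpace X] {μ : Measure X}
    (hμ : ∀ s : Set X, Bornology.IsBounded s → μ s < ⊤) (Ω : Set X) (lam : ℝ)
    {A : ℕ → Set X} (hA : ∀ i, MeasurableSet (A i)) (hanti : Antitone A) :
    Mfun μ Ω lam (⋂ i, A i) ≤ atTop.liminf fun i => Mfun μ Ω lam (A i) := by
  have hper : per μ (⋂ i, A i) ≤ atTop.liminf fun i => per μ (A i) := by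
    simpa only [per, perIn, totVar_univ] using totVarOpen_univ_le_liminf_of_tendstoL1loc
      (fun i => measurable_one.indicator (hA i)) (tendstoL1loc_indicator_iInter hμ hA hanti)
  have hvol : Tendsto (fun i => ENNReal.ofReal lam * μ (Ω \ A i)) atTop
      (𝓝 (ENNReal.ofReal lam * μ (Ω \ ⋂ i, A i))) := by
    rw [sdiff_iInter]
    exact ENNReal.Tendsto.const_mul (tendsto_measure_iUnion_atTop fun i j hij =>
      sdiff_subset_sdiff_right (hanti hij)) (Or.inr ENNReal.ofReal_ne_top)
  calc Mfun μ Ω lam (⋂ i, A i)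
      ≤ (atTop.liminf fun i => per μ (A i))
        + atTop.liminf fun i => ENNReal.ofReal lam * μ (Ω \ A i) :=
        add_le_add hper hvol.liminf_eq.ge
    _ ≤ atTop.liminf ((fun i => per μ (A i)) + fun i => ENNReal.ofReal lam * μ (Ω \ A i)) :=
        ENNReal.liminf_add_liminf_le _ _
    _ = atTop.liminf fun i => Mfun μ Ω lam (A i) := rfl

theorem Mfun_iInter_le_of_ae_antitone [OpensMeasurableSpace X] {μ : Measure X}
    (hμ : ∀ s : Set X, Bornology.IsBounded s → μ s < ⊤) (Ω : Set X) (lam : ℝ)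
    {K : ℕ → Set X} (hK : ∀ n, MeasurableSet (K n)) (hae : ∀ ⦃m n⦄, m ≤ n → K n ≤ᵐ[μ] K m)
    (hM : Antitone fun n => Mfun μ Ω lam (K n)) (n : ℕ) :
    Mfun μ Ω lam (⋂ n, K n) ≤ Mfun μ Ω lam (K n) := by
  -- Pass to the nested sets `⋂ m ≤ n, K m`, which agree with `K n` up to null sets.
  set L : ℕ → Set X := fun n => ⋂ m ≤ n, K m
  have hLK : ∀ n, L n =ᵐ[μ] K n := by
    intro n
    have hLn : L n ⊆ K n := biInter_subset_of_mem (le_refl n)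
    refine eventuallyLE_antisymm_iff.2 ⟨hLn.eventuallyLE, ?_⟩
    filter_upwards [eventually_countable_forall.2 fun m =>
      (eventually_imp_distrib_left.2 (fun hmn : m ≤ n => hae hmn) :
        ∀ᵐ x ∂μ, m ≤ n → x ∈ K n → x ∈ K m)] with x hx hxn
    exact mem_iInter₂.2 fun m hm => hx m hm hxn
  have hL : Antitone L := fun a b hab => iInter₂_mono' fun m hm => ⟨m, hm.trans hab, subset_rfl⟩
  calc Mfun μ Ω lam (⋂ n, K n) = Mfun μ Ω lam (⋂ n, L n) := by rw [biInter_le_eq_iInter]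
    _ ≤ atTop.liminf fun i => Mfun μ Ω lam (L i) :=
      Mfun_iInter_le_liminf hμ Ω lam (fun n => .biInter (to_countable _) fun m _ => hK m) hL
    _ = atTop.liminf fun i => Mfun μ Ω lam (K i) := by simp_rw [Mfun_congr_ae (hLK _)]
    _ ≤ Mfun μ Ω lam (K n) :=
      liminf_le_of_frequently_le' (eventually_atTop.2 ⟨n, fun i hi => hM hi⟩).frequently

/-- The class `𝒞_{Ω,λ}`, preordered by `≺_λ`. -/
def AdmissibleSet (μ : Measure X) (Ω : Set X) (lam : ℝ) : Type _ :=
  {A : Set X // A ⊆ Ω ∧ IsClosed A ∧ Mfun μ Ω lam A < ⊤}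

namespace AdmissibleSet

variable {μ : Measure X} {Ω : Set X} {lam : ℝ}

instance : Preorder (AdmissibleSet μ Ω lam) where
  le A B := μ (A.1 \ B.1) = 0 ∧ Mfun μ Ω lam A.1 ≤ Mfun μ Ω lam B.1
  le_refl A := ⟨by simp, le_rfl⟩
  le_trans A B C hAB hBC :=
    ⟨ae_le_set.1 ((ae_le_set.2 hAB.1).trans (ae_le_set.2 hBC.1)), hAB.2.trans hBC.2⟩

theorem monotone_measure : Monotone fun A : AdmissibleSet μ Ω lam => μ A.1 :=
  fun _ _ h => measure_mono_ae (ae_le_set.2 h.1)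

theorem bddBelow_range_of_antitone [OpensMeasurableSpace X]
    (hμ : ∀ s : Set X, Bornology.IsBounded s → μ s < ⊤) {K : ℕ → AdmissibleSet μ Ω lam}
    (hK : Antitone K) : BddBelow (range K) := by
  have hle := Mfun_iInter_le_of_ae_antitone hμ Ω lam (fun n => (K n).2.2.1.measurableSet)
    (fun m n h => ae_le_set.2 (hK h).1) fun m n h => (hK h).2
  refine ⟨⟨⋂ n, (K n).1, (iInter_subset _ 0).trans (K 0).2.1,
    isClosed_iInter fun n => (K n).2.2.1, (hle 0).trans_lt (K 0).2.2.2⟩, ?_⟩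
  rintro _ ⟨n, rfl⟩
  exact ⟨by simp [sdiff_eq_empty.2 (iInter_subset _ n)], hle n⟩

theorem exists_minimal [OpensMeasurableSpace X]
    (hμ : ∀ s : Set X, Bornology.IsBounded s → μ s < ⊤) (hΩ : μ Ω ≠ ⊤)
    (C : AdmissibleSet μ Ω lam) : ∃ G ≤ C, ∀ A ≤ G, G ≤ A := by
  obtain ⟨G, hGC, hG⟩ := monotone_measure.exists_le_forall_le_apply_eq
    (fun K hK => bddBelow_range_of_antitone hμ hK) C
  refine ⟨G, hGC, fun A hAG => ?_⟩
  have hAG' : A.1 =ᵐ[μ] G.1 := ae_eq_of_ae_subset_of_measure_ge (ae_le_set.2 hAG.1)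
    (hG A hAG).ge A.2.2.1.measurableSet.nullMeasurableSet
    (ne_top_of_le_ne_top hΩ (measure_mono G.2.1))
  exact ⟨ae_le_set.1 hAG'.symm.le, (Mfun_congr_ae hAG').ge⟩

end AdmissibleSet

theorem exists_minimal_element_Mlam_general
    {X : Type*} [MetricSpace X] [MeasurableSpace X] [BorelSpace X] (μ : Measure X)
    (hμ : ∀ s : Set X, Bornology.IsBounded s → μ s < ⊤)
    (Ω : Set X) (hΩb : Bornology.IsBounded Ω)
    (lam : ℝ) :
    (∀ A : ℕ → Set X,
        (∀ i, A i ⊆ Ω ∧ IsClosed (A i) ∧ Mfun μ Ω lam (A i) < ⊤) → Antitone A →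
        Mfun μ Ω lam (⋂ i, A i) ≤ atTop.liminf fun i => Mfun μ Ω lam (A i)) ∧
    (∀ C : Set X, C ⊆ Ω → IsClosed C → Mfun μ Ω lam C < ⊤ →
        ∃ G : Set X, (G ⊆ Ω ∧ IsClosed G ∧ Mfun μ Ω lam G < ⊤) ∧
          (μ (G \ C) = 0 ∧ Mfun μ Ω lam G ≤ Mfun μ Ω lam C) ∧
          ∀ A : Set X, A ⊆ Ω → IsClosed A → Mfun μ Ω lam A < ⊤ →
            (μ (A \ G) = 0 ∧ Mfun μ Ω lam A ≤ Mfun μ Ω lam G) →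
            (μ (G \ A) = 0 ∧ Mfun μ Ω lam G ≤ Mfun μ Ω lam A)) := by
  refine ⟨fun A hA hanti => Mfun_iInter_le_liminf hμ Ω lam
    (fun i => (hA i).2.1.measurableSet) hanti, fun C hCΩ hC hCM => ?_⟩
  obtain ⟨G, hGC, hG⟩ := AdmissibleSet.exists_minimal hμ (hμ Ω hΩb).ne ⟨C, hCΩ, hC, hCM⟩
  exact ⟨G.1, G.2, hGC, fun A hAΩ hA hAM => hG ⟨A, hAΩ, hA, hAM⟩⟩

/-- (i) `M_λ` is lower semicontinuous along nonincreasing sequences of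
closed sets in `𝒞_{Ω,λ}`; (ii) below every `C ∈ 𝒞_{Ω,λ}` there is a `≺_λ`-minimal element. -/
theorem exists_minimal_element_Mlam
    {X : Type*} [MetricSpace X] [CompleteSpace X] [TopologicalSpace.SeparableSpace X]
    [MeasurableSpace X] [BorelSpace X] (μ : Measure X)
    (hμ : ∀ s : Set X, Bornology.IsBounded s → μ s < ⊤)
    (Ω : Set X) (hΩo : IsOpen Ω) (hΩb : Bornology.IsBounded Ω)
    (lam : ℝ) (hlam : 0 < lam) :
    (∀ A : ℕ → Set X,
        (∀ i, A i ⊆ Ω ∧ IsClosed (A i) ∧ Mfun μ Ω lam (A i) < ⊤) → Antitone A →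
        Mfun μ Ω lam (⋂ i, A i) ≤ atTop.liminf fun i => Mfun μ Ω lam (A i)) ∧
    (∀ C : Set X, C ⊆ Ω → IsClosed C → Mfun μ Ω lam C < ⊤ →
        ∃ G : Set X, (G ⊆ Ω ∧ IsClosed G ∧ Mfun μ Ω lam G < ⊤) ∧
          (μ (G \ C) = 0 ∧ Mfun μ Ω lam G ≤ Mfun μ Ω lam C) ∧
          ∀ A : Set X, A ⊆ Ω → IsClosed A → Mfun μ Ω lam A < ⊤ →
            (μ (A \ G) = 0 ∧ Mfun μ Ω lam A ≤ Mfun μ Ω lam G) →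
            (μ (G \ A) = 0 ∧ Mfun μ Ω lam G ≤ Mfun μ Ω lam A)) :=
  exists_minimal_element_Mlam_general μ hμ Ω hΩb lam
end

section
/- In the weighted plane (ℝ², d_eucl, m) described in the context, there exists a constant C > 0 such that for every n ≥ 1 and every Borel set A ⊆ Ω of finite perimeter, Per(A ∩ cl(T_n); cl(T_n)) ≥ C·(L²(A ∩ T_n))^{1/2}, where cl denotes topological closure and L² is the Lebesgue measure. -/
open MeasureTheory Metric Set Filter ENNReal NNReal Topology

variable {X : Type*} [PseudoMetricSpace X] [MeasurableSpace X]

/-- The Euclidean plane `ℝ²`. -/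
noncomputable abbrev Plane : Type := EuclideanSpace ℝ (Fin 2)

/-- The point `(a, b) ∈ ℝ²`. -/
noncomputable def pt (a b : ℝ) : Plane := WithLp.toLp 2 ![a, b]

/-- The model triangle `T = {(x,y) : y ≥ 0, y < x < 1 - y}`. -/
def Ttri : Set Plane := {p | 0 ≤ p 1 ∧ p 1 < p 0 ∧ p 0 < 1 - p 1}

/-- The triangle `c·T + (a, 0)`. -/
noncomputable def triAt (c a : ℝ) : Set Plane :=
  (fun p : Plane => pt (c * p 0 + a) (c * p 1)) '' Ttri

/-- The triangle `T_n = 2^{-2n+1}·T + (2^{-2n+1}, 0)`. -/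
noncomputable def Tn (n : ℕ) : Set Plane :=
  triAt ((2:ℝ) ^ (1 - 2 * (n:ℤ))) ((2:ℝ) ^ (1 - 2 * (n:ℤ)))

/-- The square `Q = (0,1) × (−1,0)`. -/
def Qset : Set Plane := {p | p 0 ∈ Ioo (0:ℝ) 1 ∧ p 1 ∈ Ioo (-1:ℝ) 0}

/-- The domain `Ω = Q ∪ ⋃_{n ≥ 1} T_n`. -/
noncomputable def Ωset : Set Plane := Qset ∪ ⋃ n : ℕ, Tn (n + 1)

/-- The center `x_n = (2^{-2n+1} + 2^{-2n}, 0)` of the base of `T_n`. -/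
noncomputable def xpt (n : ℕ) : Plane :=
  pt ((2:ℝ) ^ (1 - 2 * (n:ℤ)) + (2:ℝ) ^ (-2 * (n:ℤ))) 0

/-- The weight `w`. -/
noncomputable def wfun (p : Plane) : ℝ≥0∞ :=
  if p 1 ∈ Icc (-1:ℝ) 0 then
    ENNReal.ofReal (min 1 (infDist p {q : Plane | q 1 = -1 ∨ q 1 = 0}))
  else 1

/-- The weighted measure `m = w·L² + Σ_{n ≥ 1} 2^{-n} δ_{x_n}`. -/
noncomputable def mws : Measure Plane :=
  volume.withDensity wfun +
    Measure.sum fun k : ℕ => ((2:ℝ≥0∞) ^ (k + 1))⁻¹ • Measure.dirac (xpt (k + 1))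

/-- The closed upper half-plane `H = ℝ × [0, ∞)`. -/
def Hup : Set Plane := {p | 0 ≤ p 1}

/-!
Fix an open `U ⊇ cl T` and locally Lipschitz `f k → χ_{A ∩ cl T}` in `L¹_loc(m|_U)`. On the open
upper half-plane the weight is `1`, so there `m ≥ L²`. On a horizontal line that meets `A ∩ T` in
positive length and along which `f k` is `L¹`-close to the indicator, `f k ≥ 3/4` somewhere in
`A ∩ T` and `f k ≤ 1/4` somewhere just past the right side of `T`; by the fundamental theorem of
calculus for Lipschitz functions, `∫ lip_a (f k) ≥ 1/2` along that line. By Fubini and a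
Chebyshev bound for the remaining lines, `liminf ∫_U lip_a (f k) dm ≥ L¹(π₂(A ∩ T)) / 2`, and
likewise with vertical lines and `π₁`. The planar Loomis–Whitney inequality
`L²(S) ≤ L¹(π₁ S) · L¹(π₂ S)` gives the claim with `C = 1/2`.
-/

section AsymptoticLipschitz

variable {α : Type*} [PseudoMetricSpace α]

noncomputable def ballLip (f : α → ℝ) (x : α) (r : ℝ) : ℝ≥0∞ :=
  ⨆ (y ∈ ball x r) (z ∈ ball x r), edist (f y) (f z) / edist y z

theorem le_ballLip (f : α → ℝ) {x y z : α} {r : ℝ} (hy : y ∈ ball x r) (hz : z ∈ ball x r) :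
    edist (f y) (f z) / edist y z ≤ ballLip f x r :=
  le_iSup₂_of_le y hy <| le_iSup₂_of_le z hz le_rfl

theorem ballLip_mono (f : α → ℝ) (x : α) {r r' : ℝ} (h : r ≤ r') :
    ballLip f x r ≤ ballLip f x r' :=
  iSup₂_le fun _ hy => iSup₂_le fun _ hz =>
    le_ballLip f (ball_subset_ball h hy) (ball_subset_ball h hz)

theorem lowerSemicontinuous_ballLip (f : α → ℝ) (r : ℝ) :
    LowerSemicontinuous fun x => ballLip f x r := by
  intro x c hc
  obtain ⟨y, hy, z, hz, hc⟩ :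
      ∃ y ∈ ball x r, ∃ z ∈ ball x r, c < edist (f y) (f z) / edist y z := by
    simpa only [ballLip, lt_iSup_iff, exists_prop] using hc
  filter_upwards [isOpen_ball.mem_nhds (mem_ball_comm.1 hy),
    isOpen_ball.mem_nhds (mem_ball_comm.1 hz)] with x' hy' hz'
  exact hc.trans_le (le_ballLip f (mem_ball_comm.1 hy') (mem_ball_comm.1 hz'))

theorem lipa_eq_iInf_nat (f : α → ℝ) (x : α) :
    lipa f x = ⨅ n : ℕ, ballLip f x (1 / (n + 1)) := by
  refine le_antisymm (le_iInf fun n => iInf₂_le _ Nat.one_div_pos_of_nat)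
    (le_iInf₂ fun r hr => ?_)
  obtain ⟨n, hn⟩ := exists_nat_one_div_lt hr
  exact iInf_le_of_le n (ballLip_mono f x hn.le)

theorem measurable_lipa [MeasurableSpace α] [OpensMeasurableSpace α] (f : α → ℝ) :
    Measurable (lipa f) := by
  simp_rw [funext (lipa_eq_iInf_nat f)]
  exact .iInf fun n => (lowerSemicontinuous_ballLip f _).measurable

theorem lipschitzOnWith_ballLip {f : α → ℝ} {x : α} {r : ℝ} (h : ballLip f x r ≠ ⊤) :
    LipschitzOnWith (ballLip f x r).toNNReal f (ball x r) := fun y hy z hz => by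
  rw [coe_toNNReal h, ← ENNReal.div_le_iff_le_mul (.inr h) (.inl (edist_ne_top y z))]
  exact le_ballLip f hy hz

theorem lipa_comp_le {β : Type*} [PseudoMetricSpace β] {L : α → β} (hL : Isometry L)
    (g : β → ℝ) (x : α) : lipa (g ∘ L) x ≤ lipa g (L x) := by
  refine le_iInf₂ fun r hr => iInf₂_le_of_le r hr <|
    iSup₂_le fun y hy => iSup₂_le fun z hz => ?_
  rw [Function.comp_apply, Function.comp_apply, ← hL.edist_eq]
  exact le_ballLip g (by rwa [mem_ball, hL.dist_eq]) (by rwa [mem_ball, hL.dist_eq])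

theorem LocLipOn.continuousOn {g : α → ℝ} {U : Set α} (hg : LocLipOn g U) :
    ContinuousOn g U := fun x hx => by
  obtain ⟨r, hr, -, K, hK⟩ := hg x hx
  exact (hK.continuousOn.continuousAt (ball_mem_nhds x hr)).continuousWithinAt

theorem LocLipOn.locallyLipschitzOn_comp {β : Type*} [PseudoMetricSpace β] {g : β → ℝ}
    {U : Set β} (hg : LocLipOn g U) {L : α → β} (hL : Isometry L) :
    LocallyLipschitzOn (L ⁻¹' U) (g ∘ L) := by
  intro x hx
  obtain ⟨r, hr, -, K, hK⟩ := hg (L x) hx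
  refine ⟨K * 1, L ⁻¹' ball (L x) r, mem_nhdsWithin_of_mem_nhds ?_,
    hK.comp hL.lipschitz.lipschitzOnWith (mapsTo_preimage _ _)⟩
  exact hL.continuous.continuousAt.preimage_mem_nhds (ball_mem_nhds _ hr)

theorem le_perIn_of_forall [MeasurableSpace α] {μ : Measure α} {E F : Set α} {c : ℝ≥0∞}
    (h : ∀ U, IsOpen U → F ⊆ U → ∀ fn : ℕ → α → ℝ, (∀ k, LocLipOn (fn k) U) →
      TendstoL1loc (μ.restrict U) fn (E.indicator 1) →
        c ≤ atTop.liminf fun k => ∫⁻ x in U, lipa (fn k) x ∂μ) :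
    c ≤ perIn μ E F := by
  simpa only [perIn, totVar, totVarOpen, le_iInf_iff] using h

end AsymptoticLipschitz

theorem enorm_deriv_le_lipa (ψ : ℝ → ℝ) (x : ℝ) : ‖deriv ψ x‖ₑ ≤ lipa ψ x := by
  refine le_iInf₂ fun r hr => show _ ≤ ballLip ψ x r from ?_
  by_cases h : ballLip ψ x r = ⊤
  · simp [h]
  · have := norm_deriv_le_of_lipschitzOn (ball_mem_nhds x hr) (lipschitzOnWith_ballLip h)
    rw [← ofReal_norm, ← coe_toNNReal h]
    exact ofReal_le_of_le_toReal this

theorem enorm_sub_le_setLIntegral_lipa {ψ : ℝ → ℝ} {a b : ℝ} {K : ℝ≥0} (hab : a ≤ b)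
    (hψ : LipschitzOnWith K ψ (Icc a b)) : ‖ψ b - ψ a‖ₑ ≤ ∫⁻ x in Icc a b, lipa ψ x := by
  rw [← (hψ.mono (uIcc_of_le hab).subset).absolutelyContinuousOnInterval.integral_deriv_eq_sub,
    intervalIntegral.integral_of_le hab]
  calc ‖∫ x in Ioc a b, deriv ψ x‖ₑ ≤ ∫⁻ x in Ioc a b, ‖deriv ψ x‖ₑ :=
        enorm_integral_le_lintegral_enorm _
    _ ≤ ∫⁻ x in Icc a b, lipa ψ x :=
        (lintegral_mono fun x => enorm_deriv_le_lipa ψ x).trans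
          (lintegral_mono_set Ioc_subset_Icc_self)

theorem half_le_setLIntegral_lipa_of_exit {φ g : ℝ → ℝ} {S E : Set ℝ} (hE : MeasurableSet E)
    (hES : E ⊆ S) (hφ : LocallyLipschitzOn S φ) (hg : ∀ x ∈ E, g x = 1) {δ : ℝ}
    (hexit : ∀ x ∈ E, ∃ x₀, x + δ ≤ x₀ ∧ Icc x x₀ ⊆ S ∧ ∀ t ∈ Ioc (x₀ - δ) x₀, g t = 0)
    {ε : ℝ≥0∞} (hεE : ε ≤ volume E) (hεδ : ε ≤ ENNReal.ofReal δ)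
    (hθ : ∫⁻ x in S, ENNReal.ofReal |φ x - g x| < 4⁻¹ * ε) :
    2⁻¹ ≤ ∫⁻ x in S, lipa φ x := by
  have witness : ∀ W, MeasurableSet W → W ⊆ S → ε ≤ volume W → ∃ x ∈ W, |φ x - g x| ≤ 4⁻¹ := by
    intro W hW hWS hεW
    by_contra! hfar
    refine hθ.not_ge ?_
    calc 4⁻¹ * ε ≤ ∫⁻ x in W, 4⁻¹ := by rw [setLIntegral_const]; gcongr
      _ ≤ ∫⁻ x in W, ENNReal.ofReal |φ x - g x| := by
          refine setLIntegral_mono' hW fun x hx => ?_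
          rw [← ofReal_ofNat, ← ENNReal.ofReal_inv_of_pos four_pos]
          exact ofReal_le_ofReal (hfar x hx).le
      _ ≤ ∫⁻ x in S, ENNReal.ofReal |φ x - g x| := lintegral_mono_set hWS
  obtain ⟨x₁, hx₁E, hx₁⟩ := witness E hE hES hεE
  obtain ⟨x₀, hx₁₀, hseg, hzero⟩ := hexit x₁ hx₁E
  obtain ⟨x₂, hx₂, hx₂near⟩ := witness (Ioc (x₀ - δ) x₀) measurableSet_Ioc
    (fun t ht => hseg ⟨by linarith [ht.1], ht.2⟩) (by rwa [Real.volume_Ioc, sub_sub_self])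
  rw [hg x₁ hx₁E] at hx₁
  rw [hzero x₂ hx₂, sub_zero] at hx₂near
  have hseg₂ : Icc x₁ x₂ ⊆ S := (Icc_subset_Icc_right hx₂.2).trans hseg
  obtain ⟨K, hK⟩ := (hφ.mono hseg₂).exists_lipschitzOnWith_of_compact isCompact_Icc
  have hjump : (2⁻¹ : ℝ) ≤ |φ x₂ - φ x₁| := by
    rw [abs_le] at hx₁ hx₂near
    rw [abs_sub_comm]
    exact (by linarith : (2⁻¹ : ℝ) ≤ φ x₁ - φ x₂).trans (le_abs_self _)
  calc (2⁻¹ : ℝ≥0∞) ≤ ‖φ x₂ - φ x₁‖ₑ := by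
        rw [Real.enorm_eq_ofReal_abs, ← ofReal_ofNat, ← ENNReal.ofReal_inv_of_pos two_pos]
        exact ofReal_le_ofReal hjump
    _ ≤ ∫⁻ x in Icc x₁ x₂, lipa φ x :=
        enorm_sub_le_setLIntegral_lipa (by linarith [hx₂.1]) hK
    _ ≤ ∫⁻ x in S, lipa φ x := lintegral_mono_set hseg₂

theorem MeasureTheory.Measure.prod_apply_le_mul_of_slices {α β : Type*} [MeasurableSpace α]
    [MeasurableSpace β] {μ : Measure α} {ν : Measure β} [SFinite μ] [SFinite ν]
    {F : Set (α × β)} (hF : MeasurableSet F) :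
    μ.prod ν F ≤ μ {x | 0 < ν (Prod.mk x ⁻¹' F)} * ν {y | 0 < μ ((·, y) ⁻¹' F)} := by
  set P := {x | 0 < ν (Prod.mk x ⁻¹' F)}
  set Q := {y | 0 < μ ((·, y) ⁻¹' F)}
  have hP : MeasurableSet P :=
    measurableSet_lt measurable_const (measurable_measure_prodMk_left hF)
  have hQ : MeasurableSet Q :=
    measurableSet_lt measurable_const (measurable_measure_prodMk_right hF)
  have hPc : μ.prod ν (F ∩ Pᶜ ×ˢ univ) = 0 := by
    rw [Measure.prod_apply (hF.inter (hP.compl.prod .univ))]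
    refine (lintegral_congr fun x => ?_).trans lintegral_zero
    by_cases hx : x ∈ P
    · simp [hx]
    · exact measure_mono_null (fun y hy => hy.1) (nonpos_iff_eq_zero.1 (not_lt.1 hx))
  have hQc : μ.prod ν (F ∩ univ ×ˢ Qᶜ) = 0 := by
    rw [Measure.prod_apply_symm (hF.inter (MeasurableSet.univ.prod hQ.compl))]
    refine (lintegral_congr fun y => ?_).trans lintegral_zero
    by_cases hy : y ∈ Q
    · simp [hy]
    · exact measure_mono_null (fun x hx => hx.1) (nonpos_iff_eq_zero.1 (not_lt.1 hy))
  have hcover : F ⊆ P ×ˢ Q ∪ ((F ∩ Pᶜ ×ˢ univ) ∪ (F ∩ univ ×ˢ Qᶜ)) := by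
    intro q hq
    by_cases h1 : q.1 ∈ P <;> by_cases h2 : q.2 ∈ Q <;> simp_all
  calc μ.prod ν F ≤ μ.prod ν (P ×ˢ Q) + μ.prod ν ((F ∩ Pᶜ ×ˢ univ) ∪ (F ∩ univ ×ˢ Qᶜ)) :=
        (measure_mono hcover).trans (measure_union_le _ _)
    _ = μ P * ν Q := by rw [measure_union_null hPc hQc, add_zero, Measure.prod_prod]

theorem mul_measure_pos_le_liminf_lintegral {Y : Type*} [MeasurableSpace Y] {μ : Measure Y}
    {s : Y → ℝ≥0∞} (hs : Measurable s) {θ φ : ℕ → Y → ℝ≥0∞} (hθ : ∀ k, Measurable (θ k))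
    (hθ0 : Tendsto (fun k => ∫⁻ y, θ k y ∂μ) atTop (𝓝 0)) {c : ℝ≥0∞} (hc : c ≠ ⊤)
    (hφ : ∀ ε ≠ 0, ∃ η ≠ 0, ∀ k y, ε ≤ s y → θ k y < η → c ≤ φ k y) :
    c * μ {y | 0 < s y} ≤ atTop.liminf fun k => ∫⁻ y, φ k y ∂μ := by
  have level : ∀ ε ≠ 0, c * μ {y | ε ≤ s y} ≤ atTop.liminf fun k => ∫⁻ y, φ k y ∂μ := by
    intro ε hε
    obtain ⟨η₀, hη₀, hφη⟩ := hφ ε hε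
    -- Chebyshev's bound `hbad` below needs a finite threshold
    set η := min η₀ 1
    have hη : η ≠ 0 := by simp [η, hη₀]
    have hηtop : η ≠ ⊤ := (min_le_right _ _).trans_lt one_lt_top |>.ne
    have hsmall : Tendsto (fun k => c * (η⁻¹ * ∫⁻ y, θ k y ∂μ)) atTop (𝓝 0) := by
      simpa using ENNReal.Tendsto.const_mul
        (ENNReal.Tendsto.const_mul hθ0 (.inr (ENNReal.inv_ne_top.2 hη))) (.inr hc)
    rw [← ENNReal.liminf_add_of_right_tendsto_zero hsmall]
    refine le_liminf_of_le (by isBoundedDefault) (.of_forall fun k => ?_)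
    set G := {y | ε ≤ s y} ∩ {y | θ k y < η}
    have hG : MeasurableSet G :=
      (measurableSet_le measurable_const hs).inter (measurableSet_lt (hθ k) measurable_const)
    have hgood : c * μ G ≤ ∫⁻ y, φ k y ∂μ := by
      rw [← setLIntegral_const]
      exact (setLIntegral_mono' hG fun y hy => hφη k y hy.1 (hy.2.trans_le (min_le_left _ _))).trans
        (setLIntegral_le_lintegral _ _)
    have hbad : μ {y | η ≤ θ k y} ≤ η⁻¹ * ∫⁻ y, θ k y ∂μ :=
      (ENNReal.mul_le_iff_le_inv hη hηtop).1 (mul_meas_ge_le_lintegral₀ (hθ k).aemeasurable η)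
    have hsplit : {y | ε ≤ s y} ⊆ G ∪ {y | η ≤ θ k y} := fun y hy => by
      by_cases h : θ k y < η
      · exact .inl ⟨hy, h⟩
      · exact .inr (not_lt.1 h)
    calc c * μ {y | ε ≤ s y} ≤ c * (μ G + μ {y | η ≤ θ k y}) :=
          mul_le_mul_right ((measure_mono hsplit).trans (measure_union_le _ _)) c
      _ ≤ _ := by
          rw [mul_add]
          exact add_le_add hgood (mul_le_mul_right hbad c)
  have hunion : {y | 0 < s y} = ⋃ n : ℕ, {y | ((n : ℝ≥0∞) + 1)⁻¹ ≤ s y} := by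
    ext y
    simp only [mem_ofPred_eq, mem_iUnion]
    refine ⟨fun hy => ?_, fun ⟨n, hn⟩ => lt_of_lt_of_le (by simp) hn⟩
    obtain ⟨n, hn⟩ := ENNReal.exists_inv_nat_lt hy.ne'
    exact ⟨n, (ENNReal.inv_le_inv.2 le_self_add).trans hn.le⟩
  have hmono : Monotone fun n : ℕ => {y | ((n : ℝ≥0∞) + 1)⁻¹ ≤ s y} := by
    intro m n hmn y (hy : _ ≤ s y)
    exact (ENNReal.inv_le_inv.2 (by gcongr)).trans hy
  rw [hunion, hmono.measure_iUnion, ENNReal.mul_iSup]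
  exact iSup_le fun n => level _ (by simp)

theorem ENNReal.mul_rpow_one_half_le_max (a b : ℝ≥0∞) : (a * b) ^ (1 / 2 : ℝ) ≤ max a b := by
  calc (a * b) ^ (1 / 2 : ℝ) ≤ (max a b ^ (2 : ℝ)) ^ (1 / 2 : ℝ) := by
        rw [ENNReal.rpow_two, sq]; gcongr; exacts [le_max_left _ _, le_max_right _ _]
    _ = max a b := by rw [← ENNReal.rpow_mul]; norm_num

theorem ContinuousOn.measurable_indicator {α β : Type*} [TopologicalSpace α] [MeasurableSpace α]
    [OpensMeasurableSpace α] [TopologicalSpace β] [MeasurableSpace β] [BorelSpace β] [Zero β]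
    {g : α → β} {R : Set α} (hg : ContinuousOn g R) (hR : MeasurableSet R) :
    Measurable (R.indicator g) := by
  classical
  rw [← piecewise_eq_indicator]
  exact hg.measurable_piecewise continuousOn_const hR

theorem MeasureTheory.MeasurePreserving.lintegral_lintegral_indicator {α β γ : Type*}
    [MeasurableSpace α] [MeasurableSpace β] [MeasurableSpace γ] {μ : Measure α}
    {μ₁ : Measure β} {μ₂ : Measure γ} [SFinite μ₁] [SFinite μ₂] {L : β × γ → α}
    (hL : MeasurePreserving L (μ₁.prod μ₂) μ) {R : Set α} (hR : MeasurableSet R) {h : α → ℝ≥0∞}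
    (hh : Measurable (R.indicator h)) :
    ∫⁻ y, ∫⁻ x, R.indicator h (L (x, y)) ∂μ₁ ∂μ₂ = ∫⁻ p in R, h p ∂μ :=
  calc ∫⁻ y, ∫⁻ x, R.indicator h (L (x, y)) ∂μ₁ ∂μ₂ = ∫⁻ q, R.indicator h (L q) ∂(μ₁.prod μ₂) :=
        (lintegral_prod_symm' _ (hh.comp hL.measurable)).symm
    _ = ∫⁻ p, R.indicator h p ∂μ := hL.lintegral_comp hh
    _ = ∫⁻ p in R, h p ∂μ := lintegral_indicator hR _

theorem half_mul_volume_le_liminf_lintegral_lipa {α : Type*} [PseudoMetricSpace α]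
    [MeasurableSpace α] [OpensMeasurableSpace α] {μ ν : Measure α} {U R E : Set α}
    {fn : ℕ → α → ℝ} {f : α → ℝ} {L : ℝ × ℝ → α} {δ : ℝ}
    (hR : MeasurableSet R) (hRb : Bornology.IsBounded R) (hRU : R ⊆ U) (hμν : μ.restrict R ≤ ν)
    (hfn : ∀ k, LocLipOn (fn k) U) (hf : Measurable f) (hconv : TendstoL1loc (ν.restrict U) fn f)
    (hL : MeasurePreserving L volume μ) (hline : ∀ y, Isometry fun x => L (x, y))
    (hE : MeasurableSet E) (hER : E ⊆ R) (hf1 : ∀ p ∈ E, f p = 1) (hδ : 0 < δ)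
    (hexit : ∀ x y, L (x, y) ∈ E → ∃ x₀, x + δ ≤ x₀ ∧ (∀ t ∈ Icc x x₀, L (t, y) ∈ R) ∧
      ∀ t ∈ Ioc (x₀ - δ) x₀, f (L (t, y)) = 0) :
    2⁻¹ * volume {y | 0 < volume {x | L (x, y) ∈ E}} ≤
      atTop.liminf fun k => ∫⁻ p in U, lipa (fn k) p ∂ν := by
  have hμνR : μ.restrict R ≤ (ν.restrict U).restrict R := by
    rw [Measure.restrict_restrict_of_subset hRU]
    simpa only [Measure.restrict_restrict_of_subset subset_rfl] using
      Measure.restrict_mono (subset_refl R) hμν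
  have hlineR : ∀ y, MeasurableSet ((fun x => L (x, y)) ⁻¹' R) :=
    fun y => hL.measurable.comp measurable_prodMk_right hR
  set Ψ : ℕ → α → ℝ≥0∞ := fun k => R.indicator fun p => ENNReal.ofReal |fn k p - f p|
  have hΨ : ∀ k, Measurable (Ψ k) := fun k => by
    convert (ENNReal.measurable_ofReal.comp
      ((((hfn k).continuousOn.mono hRU).measurable_indicator hR).sub hf).abs).indicator hR using 1
    ext p; by_cases hp : p ∈ R <;> simp [Ψ, hp]
  have hΦ : ∀ k, Measurable (R.indicator (lipa (fn k))) := fun k =>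
    (measurable_lipa _).indicator hR
  have hslice : ∀ (h : α → ℝ≥0∞) y,
      ∫⁻ x, R.indicator h (L (x, y)) = ∫⁻ x in (fun x => L (x, y)) ⁻¹' R, h (L (x, y)) := by
    intro h y
    rw [← lintegral_indicator (hlineR y)]
    rfl
  have hθ0 : Tendsto (fun k => ∫⁻ y, ∫⁻ x, Ψ k (L (x, y))) atTop (𝓝 0) := by
    refine tendsto_of_tendsto_of_tendsto_of_le_of_le tendsto_const_nhds (hconv R hRb)
      (fun _ => zero_le) fun k => ?_
    rw [hL.lintegral_lintegral_indicator hR (hΨ k)]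
    exact lintegral_mono' hμνR le_rfl
  have henergy : ∀ k, ∫⁻ y, ∫⁻ x, R.indicator (lipa (fn k)) (L (x, y)) ≤
      ∫⁻ p in U, lipa (fn k) p ∂ν := fun k => by
    rw [hL.lintegral_lintegral_indicator hR (hΦ k)]
    exact lintegral_mono' (hμνR.trans Measure.restrict_le_self) le_rfl
  have hline_bound : ∀ k y ε, ε ≤ volume {x | L (x, y) ∈ E} → ε ≤ ENNReal.ofReal δ →
      ∫⁻ x, Ψ k (L (x, y)) < 4⁻¹ * ε → 2⁻¹ ≤ ∫⁻ x, R.indicator (lipa (fn k)) (L (x, y)) := by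
    intro k y ε hεE hεδ hθ
    rw [hslice] at hθ ⊢
    refine (half_le_setLIntegral_lipa_of_exit (φ := fn k ∘ fun x => L (x, y))
      (g := f ∘ fun x => L (x, y)) (hL.measurable.comp measurable_prodMk_right hE)
      (fun x hx => hER hx) (((hfn k).locallyLipschitzOn_comp (hline y)).mono
        (preimage_mono hRU)) (fun x hx => hf1 _ hx) (fun x hx => hexit x y hx) hεE hεδ hθ).trans ?_
    exact lintegral_mono fun x => lipa_comp_le (hline y) (fn k) x
  refine (mul_measure_pos_le_liminf_lintegral
    (measurable_measure_prodMk_right (hL.measurable hE))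
    (fun k => ((hΨ k).comp hL.measurable).lintegral_prod_left') hθ0 (by simp) ?_).trans
    (liminf_le_liminf (.of_forall henergy))
  intro ε hε
  -- capped by `δ` so that the exit interval `Ioc (x₀ - δ) x₀` also has measure `≥ ε`
  refine ⟨4⁻¹ * min ε (ENNReal.ofReal δ), by simp [hε, hδ], fun k y hεy hθ => ?_⟩
  exact hline_bound k y _ ((min_le_left _ _).trans hεy) (min_le_right _ _) hθ

theorem exists_exit_of_isometry {α : Type*} [PseudoMetricSpace α] {γ : ℝ → α} (hγ : Isometry γ)
    {K : Set α} {x e δ : ℝ} (hxe : x < e) (hδ : 0 < δ) (hin : ∀ t ∈ Ioo x e, γ t ∈ K)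
    (hout : ∀ t, e < t → γ t ∉ closure K) :
    ∃ x₀, x + δ / 2 ≤ x₀ ∧ (∀ t ∈ Icc x x₀, γ t ∈ thickening δ (closure K)) ∧
      ∀ t ∈ Ioc (x₀ - δ / 2) x₀, γ t ∉ closure K := by
  refine ⟨e + δ / 2, by linarith, fun t ht => ?_, fun t ht => hout t (by linarith [ht.1])⟩
  have hmem : γ (min t e) ∈ closure K :=
    map_mem_closure hγ.continuous (by
      rw [closure_Ioo hxe.ne]; exact ⟨le_min ht.1 hxe.le, min_le_right _ _⟩) hin
  refine mem_thickening_iff.2 ⟨_, hmem, ?_⟩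
  have h₁ : min t e ≤ t := min_le_left _ _
  have h₂ : t - δ / 2 ≤ min t e := le_min (by linarith) (by linarith [ht.2])
  rw [hγ.dist_eq, Real.dist_eq, abs_lt]
  constructor <;> linarith

@[simp] theorem pt_apply_zero (a b : ℝ) : pt a b 0 = a := rfl
@[simp] theorem pt_apply_one (a b : ℝ) : pt a b 1 = b := rfl

theorem pt_eta (p : Plane) : pt (p 0) (p 1) = p := by
  ext i; fin_cases i <;> rfl

theorem continuous_pt : Continuous fun q : ℝ × ℝ => pt q.1 q.2 := by
  unfold pt; fun_prop

theorem dist_pt_pt (a b a' b' : ℝ) :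
    dist (pt a b) (pt a' b') = √((a - a') ^ 2 + (b - b') ^ 2) := by
  simp [EuclideanSpace.dist_eq, Fin.sum_univ_two, Real.dist_eq, sq_abs]

theorem isometry_pt_left (y : ℝ) : Isometry fun x => pt x y :=
  Isometry.of_dist_eq fun u v => by simp [dist_pt_pt, Real.sqrt_sq_eq_abs, Real.dist_eq]

theorem isometry_pt_right (x : ℝ) : Isometry fun y => pt x y :=
  Isometry.of_dist_eq fun u v => by simp [dist_pt_pt, Real.sqrt_sq_eq_abs, Real.dist_eq]

theorem measurePreserving_pt : MeasurePreserving (fun q : ℝ × ℝ => pt q.1 q.2) volume volume :=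
  (EuclideanSpace.volume_preserving_symm_measurableEquiv_toLp (Fin 2)).symm.comp
    (volume_preserving_finTwoArrow ℝ).symm

theorem volume_le_mul_slices {E : Set Plane} (hE : MeasurableSet E) :
    volume E ≤ volume {x | 0 < volume {y | pt x y ∈ E}} *
      volume {y | 0 < volume {x | pt x y ∈ E}} :=
  calc volume E = volume ((fun q : ℝ × ℝ => pt q.1 q.2) ⁻¹' E) :=
        (measurePreserving_pt.measure_preimage hE.nullMeasurableSet).symm
    _ ≤ _ := Measure.prod_apply_le_mul_of_slices (measurePreserving_pt.measurable hE)

theorem volume_setOf_apply_one_eq_zero : volume {p : Plane | p 1 = 0} = 0 := by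
  set H : Submodule ℝ Plane :=
    LinearMap.ker (EuclideanSpace.proj (1 : Fin 2) : Plane →L[ℝ] ℝ).toLinearMap
  have hH : H ≠ ⊤ := fun h => by
    have : pt 0 1 ∈ H := h ▸ Submodule.mem_top
    simp [H] at this
  convert Measure.addHaar_submodule volume H hH
  ext p; simp [H]

theorem volume_restrict_le_mws : volume.restrict {p : Plane | 0 < p 1} ≤ mws := by
  have hS : MeasurableSet {p : Plane | 0 < p 1} :=
    measurableSet_lt measurable_const (by fun_prop)
  rw [← withDensity_indicator_one hS, mws]
  refine (withDensity_mono (.of_forall fun p => ?_)).trans (Measure.le_add_right le_rfl)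
  by_cases hp : 0 < p 1
  · simp [hp, wfun, hp.not_ge]
  · simp [hp]

theorem mem_triAt_iff {c a : ℝ} (hc : 0 < c) {p : Plane} :
    p ∈ triAt c a ↔ 0 ≤ p 1 ∧ a + p 1 < p 0 ∧ p 0 < a + c - p 1 := by
  constructor
  · rintro ⟨q, ⟨hq0, hq1, hq2⟩, rfl⟩
    simp only [pt_apply_zero, pt_apply_one]
    refine ⟨by positivity, ?_, ?_⟩ <;> nlinarith
  · rintro ⟨h0, h1, h2⟩
    refine ⟨pt ((p 0 - a) / c) (p 1 / c), ⟨?_, ?_, ?_⟩, ?_⟩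
    · simp only [pt_apply_one]; positivity
    · simp only [pt_apply_zero, pt_apply_one]; gcongr; linarith
    · simp only [pt_apply_zero, pt_apply_one]
      rw [div_lt_iff₀ hc, sub_mul, one_mul, div_mul_cancel₀ _ hc.ne']; linarith
    · simp only [pt_apply_zero, pt_apply_one]
      rw [mul_div_cancel₀ _ hc.ne', mul_div_cancel₀ _ hc.ne', sub_add_cancel, pt_eta]

theorem closure_triAt_subset {c a : ℝ} (hc : 0 < c) :
    closure (triAt c a) ⊆ {p | 0 ≤ p 1 ∧ a + p 1 ≤ p 0 ∧ p 0 ≤ a + c - p 1} := by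
  refine closure_minimal (fun p hp => ?_) ?_
  · obtain ⟨h0, h1, h2⟩ := (mem_triAt_iff hc).1 hp
    exact ⟨h0, h1.le, h2.le⟩
  · simp only [ofPred_and]
    refine (isClosed_le ?_ ?_).inter ((isClosed_le ?_ ?_).inter (isClosed_le ?_ ?_)) <;> fun_prop

theorem isCompact_closure_triAt {c a : ℝ} (hc : 0 < c) : IsCompact (closure (triAt c a)) := by
  refine (((isCompact_Icc (a := a) (b := a + c)).prod (isCompact_Icc (a := 0) (b := c))).image
    continuous_pt).of_isClosed_subset isClosed_closure fun p hp => ⟨(p 0, p 1), ?_, pt_eta p⟩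
  obtain ⟨h0, h1, h2⟩ := closure_triAt_subset hc hp
  exact ⟨⟨by linarith, by linarith⟩, ⟨h0, by linarith⟩⟩

theorem measurableSet_triAt {c a : ℝ} (hc : 0 < c) : MeasurableSet (triAt c a) := by
  rw [show triAt c a = {p : Plane | 0 ≤ p 1} ∩ ({p | a + p 1 < p 0} ∩ {p | p 0 < a + c - p 1})
    from Set.ext fun p => mem_triAt_iff hc]
  refine (measurableSet_le ?_ ?_).inter
    ((measurableSet_lt ?_ ?_).inter (measurableSet_lt ?_ ?_)) <;> fun_prop

theorem volume_inter_triAt_le {c a : ℝ} (hc : 0 < c) (A : Set Plane) :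
    volume (A ∩ triAt c a) ≤ volume (A ∩ triAt c a ∩ {p | 0 < p 1}) := by
  have hnull : volume ((A ∩ triAt c a) \ {p | 0 < p 1}) = 0 := by
    refine measure_mono_null (fun p hp => ?_) volume_setOf_apply_one_eq_zero
    exact le_antisymm (not_lt.1 hp.2) ((mem_triAt_iff hc).1 hp.1.2).1
  simpa [hnull] using measure_le_inter_add_sdiff volume (A ∩ triAt c a) {p | 0 < p 1}

theorem exists_exit_triAt_horizontal {c a x y δ : ℝ} (hc : 0 < c) (hδ : 0 < δ)
    (hp : pt x y ∈ triAt c a) :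
    ∃ x₀, x + δ / 2 ≤ x₀ ∧ (∀ t ∈ Icc x x₀, pt t y ∈ thickening δ (closure (triAt c a))) ∧
      ∀ t ∈ Ioc (x₀ - δ / 2) x₀, pt t y ∉ closure (triAt c a) := by
  obtain ⟨h0, h1, h2⟩ := (mem_triAt_iff hc).1 hp
  simp only [pt_apply_zero, pt_apply_one] at h0 h1 h2
  refine exists_exit_of_isometry (isometry_pt_left y) h2 hδ (fun t ht => ?_) fun t ht hcl => ?_
  · refine (mem_triAt_iff hc).2 ⟨h0, ?_, ht.2⟩
    simp only [pt_apply_zero, pt_apply_one]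
    linarith [ht.1]
  · have := (closure_triAt_subset hc hcl).2.2
    simp only [pt_apply_zero, pt_apply_one] at this
    linarith

theorem exists_exit_triAt_vertical {c a x y δ : ℝ} (hc : 0 < c) (hδ : 0 < δ)
    (hp : pt x y ∈ triAt c a) :
    ∃ y₀, y + δ / 2 ≤ y₀ ∧ (∀ t ∈ Icc y y₀, pt x t ∈ thickening δ (closure (triAt c a))) ∧
      ∀ t ∈ Ioc (y₀ - δ / 2) y₀, pt x t ∉ closure (triAt c a) := by
  obtain ⟨h0, h1, h2⟩ := (mem_triAt_iff hc).1 hp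
  simp only [pt_apply_zero, pt_apply_one] at h0 h1 h2
  refine exists_exit_of_isometry (isometry_pt_right x) (e := min (x - a) (a + c - x))
    (lt_min (by linarith) (by linarith)) hδ (fun t ht => ?_) fun t ht hcl => ?_
  · have := ht.2.trans_le (min_le_left _ _)
    have := ht.2.trans_le (min_le_right _ _)
    refine (mem_triAt_iff hc).2 ?_
    simp only [pt_apply_zero, pt_apply_one]
    exact ⟨by linarith [ht.1], by linarith, by linarith⟩
  · obtain ⟨-, h1', h2'⟩ := closure_triAt_subset hc hcl
    simp only [pt_apply_zero, pt_apply_one] at h1' h2'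
    exact ht.not_ge (le_min (by linarith) (by linarith))

theorem half_mul_rpow_volume_le_perIn_triAt {ν : Measure Plane}
    (hν : volume.restrict {p : Plane | 0 < p 1} ≤ ν) {c : ℝ} (hc : 0 < c) (a : ℝ)
    {A : Set Plane} (hA : MeasurableSet A) :
    2⁻¹ * volume (A ∩ triAt c a) ^ (1 / 2 : ℝ) ≤
      perIn ν (A ∩ closure (triAt c a)) (closure (triAt c a)) := by
  set T := triAt c a
  set H : Set Plane := {p | 0 < p 1}
  have hH : IsOpen H := isOpen_lt continuous_const (by fun_prop)
  -- only the open half-plane `H`, where `m ≥ L²`, is used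
  set E := A ∩ T ∩ H
  have hE : MeasurableSet E := (hA.inter (measurableSet_triAt hc)).inter hH.measurableSet
  set f := (A ∩ closure T).indicator (1 : Plane → ℝ)
  have hf : Measurable f := measurable_one.indicator (hA.inter isClosed_closure.measurableSet)
  have hf0 : ∀ p ∉ closure T, f p = 0 := fun p hp => indicator_of_notMem (fun h => hp h.2) _
  refine le_perIn_of_forall fun U hU hTU fn hfn hconv => ?_
  obtain ⟨δ, hδ, hδU⟩ := (isCompact_closure_triAt hc).exists_thickening_subset_open hU hTU
  have slicing := fun (L : ℝ × ℝ → Plane) hL hline hexit =>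
    half_mul_volume_le_liminf_lintegral_lipa (R := thickening δ (closure T) ∩ H) (L := L)
      (isOpen_thickening.inter hH).measurableSet
      ((isCompact_closure_triAt hc).isBounded.thickening.subset inter_subset_left)
      (inter_subset_left.trans hδU) ((Measure.restrict_mono inter_subset_right le_rfl).trans hν)
      hfn hf hconv hL hline hE
      (fun p hp => ⟨self_subset_thickening hδ _ (subset_closure hp.1.2), hp.2⟩)
      (fun p hp => indicator_of_mem (show p ∈ A ∩ closure T from ⟨hp.1.1, subset_closure hp.1.2⟩) _)
      (half_pos hδ) hexit
  have hhor := slicing (fun q => pt q.1 q.2) measurePreserving_pt isometry_pt_left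
    fun x y hp => by
      obtain ⟨x₀, hx₀, hseg, hout⟩ := exists_exit_triAt_horizontal hc hδ hp.1.2
      exact ⟨x₀, hx₀, fun t ht => ⟨hseg t ht, hp.2⟩, fun t ht => hf0 _ (hout t ht)⟩
  have hver := slicing (fun q => pt q.2 q.1)
    (measurePreserving_pt.comp Measure.measurePreserving_swap) isometry_pt_right
    fun y x hp => by
      obtain ⟨y₀, hy₀, hseg, hout⟩ := exists_exit_triAt_vertical hc hδ hp.1.2
      have hy : 0 < y := hp.2
      exact ⟨y₀, hy₀, fun t ht => ⟨hseg t ht, show 0 < t by linarith [ht.1]⟩,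
        fun t ht => hf0 _ (hout t ht)⟩
  set P := volume {x | 0 < volume {y | pt x y ∈ E}}
  set Q := volume {y | 0 < volume {x | pt x y ∈ E}}
  calc 2⁻¹ * volume (A ∩ T) ^ (1 / 2 : ℝ) ≤ 2⁻¹ * max P Q := by
        gcongr
        exact (ENNReal.rpow_le_rpow ((volume_inter_triAt_le hc A).trans (volume_le_mul_slices hE))
          (by norm_num)).trans
          (ENNReal.mul_rpow_one_half_le_max _ _)
    _ ≤ _ := by
        rcases le_total P Q with h | h
        · rw [max_eq_right h]; exact hhor
        · rw [max_eq_left h]; exact hver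

/-- In the weighted plane, there is `C > 0` such that for every `n ≥ 1` and
every Borel `A ⊆ Ω` of finite perimeter,
`Per(A ∩ cl(T_n); cl(T_n)) ≥ C · (L²(A ∩ T_n))^{1/2}`. -/
theorem isoperimetric_in_triangles :
    ∃ C : ℝ, 0 < C ∧ ∀ n : ℕ, 1 ≤ n →
      ∀ A : Set Plane, A ⊆ Ωset → MeasurableSet A → per mws A < ⊤ →
        ENNReal.ofReal C * (volume (A ∩ Tn n)) ^ (1/2 : ℝ) ≤
          perIn mws (A ∩ closure (Tn n)) (closure (Tn n)) := by
  refine ⟨2⁻¹, by norm_num, fun n _ A _ hA _ => ?_⟩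
  rw [ENNReal.ofReal_inv_of_pos two_pos, ofReal_ofNat]
  exact half_mul_rpow_volume_le_perIn_triAt volume_restrict_le_mws (zpow_pos two_pos _) _ hA
end
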